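/- arXiv:math/0602005 — 4 statements merged into one kernel-verified Lean document; each statement's English description precedes it below -/
import Mathlib

section
/- Let the strongly monotone, forward complete system ẋ = f(x) on X be translation invariant along the unit vector v ∈ interior(K), with X closed and invariant under translations by v. Then every solution φ_t(ξ) that is bounded modulo v is such that π_v(φ_t(ξ)) converges as t → ∞ to a point p ∈ X ∩ v^⊥ with f(p) ∈ span{v} (an equilibrium of the projected system ẋ̃ = (I − vvᵀ)f(x̃)); moreover this equilibrium p is unique. -/
open Filter Topology Set

/-!
Write `M(w) = min {l | w ⪯ l • v}` and let `osc(w) = M(w) + M(-w)` be Hilbert's oscillation, a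
continuous seminorm with kernel `ℝ ∙ v`. Translation invariance and monotonicity make
`t ↦ osc(φ_t y - φ_t x)` nonincreasing, and strong monotonicity makes it strictly decreasing
unless `y - x ∈ ℝ ∙ v`.

Two equilibria of the projected system move along `v` at constant speeds, so the oscillation of
their difference is constant, hence zero: they agree modulo `v`, and on `v^⊥` they are equal.
If `q` is a limit point of `π_v(φ_t ξ)`, the oscillation between the orbits of `q` and `φ_s q` is
the limit of the monotone one between the orbits of `ξ` and `φ_s ξ`, so it is constant in time
and must vanish (LaSalle); thus `φ_s q - q ∈ ℝ ∙ v` for all `s`, and `f q ∈ ℝ ∙ v`. A bounded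
orbit has limit points, and uniqueness of the equilibrium gives convergence.
-/

/-- The orthogonal projection `π_v(x) = x - (vᵀx) v` onto `v^⊥`. -/
noncomputable def piProj {n : ℕ} (v x : EuclideanSpace ℝ (Fin n)) :
    EuclideanSpace ℝ (Fin n) :=
  x - (inner ℝ v x : ℝ) • v

variable {E : Type*} [NormedAddCommGroup E] [NormedSpace ℝ E]

/-- `v` is an order unit (an interior point of the closed salient convex cone `K`) for the order
`x ⪯ y ↔ y - x ∈ K`. -/
structure IsOrderUnit (K : Set E) (v : E) : Prop where
  isClosed : IsClosed K
  convex : Convex ℝ K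
  smul_mem : ∀ c : ℝ, 0 ≤ c → ∀ x ∈ K, c • x ∈ K
  eq_zero_of_neg_mem : ∀ x ∈ K, -x ∈ K → x = 0
  mem_interior : v ∈ interior K
  ne_zero : v ≠ 0

/-- Hilbert's `M(w / v)`, the least `l` with `w ⪯ l • v`. -/
noncomputable def upperCoeff (K : Set E) (v w : E) : ℝ :=
  sInf {l : ℝ | l • v - w ∈ K}

/-- Hilbert's oscillation `M(w / v) - m(w / v)`, using `m(w / v) = -M(-w / v)`. -/
noncomputable def coneOscillation (K : Set E) (v w : E) : ℝ :=
  upperCoeff K v w + upperCoeff K v (-w)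

namespace IsOrderUnit

variable {K : Set E} {v : E}

theorem zero_mem (hK : IsOrderUnit K v) : (0 : E) ∈ K := by
  simpa using hK.smul_mem 0 le_rfl v (interior_subset hK.mem_interior)

theorem add_mem (hK : IsOrderUnit K v) {x y : E} (hx : x ∈ K) (hy : y ∈ K) : x + y ∈ K := by
  have hmid := hK.convex hx hy (by norm_num : (0 : ℝ) ≤ 1 / 2) (by norm_num : (0 : ℝ) ≤ 1 / 2)
    (by norm_num)
  convert hK.smul_mem 2 zero_le_two _ hmid using 1
  rw [smul_add, smul_smul, smul_smul]
  norm_num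

theorem nonneg_of_smul_mem (hK : IsOrderUnit K v) {c : ℝ} (hc : c • v ∈ K) : 0 ≤ c := by
  by_contra! hneg
  have hnegv : -v ∈ K := by
    convert hK.smul_mem (-c)⁻¹ (inv_nonneg.2 (neg_nonneg.2 hneg.le)) _ hc using 1
    rw [smul_smul, inv_neg, neg_mul, inv_mul_cancel₀ hneg.ne, neg_one_smul]
  exact hK.ne_zero (hK.eq_zero_of_neg_mem v (interior_subset hK.mem_interior) hnegv)

/-- The ball of radius `ε` around `v` lies in `K`, so `(2 / ε) ‖w‖ • v - w ∈ K`. -/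
theorem exists_smul_norm_sub_mem (hK : IsOrderUnit K v) :
    ∃ C > 0, ∀ w : E, (C * ‖w‖) • v - w ∈ K := by
  obtain ⟨ε, hε, hball⟩ := Metric.isOpen_iff.1 isOpen_interior v hK.mem_interior
  refine ⟨2 / ε, by positivity, fun w => ?_⟩
  rcases eq_or_ne w 0 with rfl | hw
  · simpa using hK.zero_mem
  have hl : 0 < 2 / ε * ‖w‖ := by positivity
  have hmem : v - (2 / ε * ‖w‖)⁻¹ • w ∈ K := by
    refine interior_subset (hball ?_)
    rw [Metric.mem_ball, dist_eq_norm, sub_sub_cancel_left, norm_neg, norm_smul, norm_inv,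
      Real.norm_of_nonneg hl.le]
    field_simp [norm_ne_zero_iff.2 hw]
    linarith
  convert hK.smul_mem _ hl.le _ hmem using 1
  rw [smul_sub, smul_smul, mul_inv_cancel₀ hl.ne', one_smul]

theorem bddBelow_setOf_smul_sub_mem (hK : IsOrderUnit K v) (w : E) :
    BddBelow {l : ℝ | l • v - w ∈ K} := by
  obtain ⟨C, -, hC⟩ := hK.exists_smul_norm_sub_mem
  refine ⟨-(C * ‖-w‖), fun l hl => ?_⟩
  have hsum : (l + C * ‖-w‖) • v ∈ K := by
    convert hK.add_mem hl (hC (-w)) using 1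
    rw [add_smul]
    abel
  linarith [hK.nonneg_of_smul_mem hsum]

theorem smul_upperCoeff_sub_mem (hK : IsOrderUnit K v) (w : E) : upperCoeff K v w • v - w ∈ K := by
  obtain ⟨C, -, hC⟩ := hK.exists_smul_norm_sub_mem
  have hclosed : IsClosed {l : ℝ | l • v - w ∈ K} :=
    hK.isClosed.preimage ((continuous_id.smul continuous_const).sub continuous_const)
  exact hclosed.csInf_mem ⟨_, hC w⟩ (hK.bddBelow_setOf_smul_sub_mem w)

theorem upperCoeff_le_iff (hK : IsOrderUnit K v) {w : E} {l : ℝ} :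
    upperCoeff K v w ≤ l ↔ l • v - w ∈ K := by
  refine ⟨fun h => ?_, fun h => csInf_le (hK.bddBelow_setOf_smul_sub_mem w) h⟩
  have hpos := hK.smul_mem _ (sub_nonneg.2 h) v (interior_subset hK.mem_interior)
  convert hK.add_mem (hK.smul_upperCoeff_sub_mem w) hpos using 1
  rw [sub_smul]
  abel

theorem upperCoeff_zero (hK : IsOrderUnit K v) : upperCoeff K v 0 = 0 := by
  refine le_antisymm (hK.upperCoeff_le_iff.2 (by simpa using hK.zero_mem)) ?_
  exact hK.nonneg_of_smul_mem (by simpa using hK.smul_upperCoeff_sub_mem 0)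

theorem upperCoeff_add_le (hK : IsOrderUnit K v) (w₁ w₂ : E) :
    upperCoeff K v (w₁ + w₂) ≤ upperCoeff K v w₁ + upperCoeff K v w₂ := by
  rw [hK.upperCoeff_le_iff]
  convert hK.add_mem (hK.smul_upperCoeff_sub_mem w₁) (hK.smul_upperCoeff_sub_mem w₂) using 1
  rw [add_smul]
  abel

theorem upperCoeff_add_smul (hK : IsOrderUnit K v) (w : E) (c : ℝ) :
    upperCoeff K v (w + c • v) = upperCoeff K v w + c := by
  have key : ∀ (w : E) (c : ℝ), upperCoeff K v (w + c • v) ≤ upperCoeff K v w + c := by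
    intro w c
    rw [hK.upperCoeff_le_iff]
    convert hK.smul_upperCoeff_sub_mem w using 1
    rw [add_smul]
    abel
  refine le_antisymm (key w c) ?_
  have := key (w + c • v) (-c)
  rw [neg_smul, add_neg_cancel_right] at this
  linarith

theorem upperCoeff_lt_of_mem_interior (hK : IsOrderUnit K v) {w : E} {l : ℝ}
    (hl : l • v - w ∈ interior K) : upperCoeff K v w < l := by
  have hcont : Continuous fun ε : ℝ => (l - ε) • v - w :=
    ((continuous_const.sub continuous_id).smul continuous_const).sub continuous_const
  have hnear : ∀ᶠ ε in 𝓝[>] (0 : ℝ), (l - ε) • v - w ∈ interior K :=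
    nhdsWithin_le_nhds (hcont.continuousAt.preimage_mem_nhds
      (by simpa using isOpen_interior.mem_nhds hl))
  obtain ⟨ε, hεK, hε : 0 < ε⟩ := (hnear.and self_mem_nhdsWithin).exists
  linarith [hK.upperCoeff_le_iff.2 (interior_subset hεK)]

theorem lipschitzWith_upperCoeff (hK : IsOrderUnit K v) :
    ∃ C, LipschitzWith C (upperCoeff K v) := by
  obtain ⟨C, hC, hCw⟩ := hK.exists_smul_norm_sub_mem
  refine ⟨C.toNNReal, LipschitzWith.of_le_add_mul _ fun w w' => ?_⟩
  calc upperCoeff K v w = upperCoeff K v (w' + (w - w')) := by rw [add_sub_cancel]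
    _ ≤ upperCoeff K v w' + upperCoeff K v (w - w') := hK.upperCoeff_add_le _ _
    _ ≤ upperCoeff K v w' + C.toNNReal * dist w w' := by
      rw [Real.coe_toNNReal C hC.le, dist_eq_norm]
      exact add_le_add_right (hK.upperCoeff_le_iff.2 (hCw _)) _

theorem continuous_upperCoeff (hK : IsOrderUnit K v) : Continuous (upperCoeff K v) :=
  hK.lipschitzWith_upperCoeff.elim fun _ h => h.continuous

theorem continuous_coneOscillation (hK : IsOrderUnit K v) : Continuous (coneOscillation K v) :=
  hK.continuous_upperCoeff.add (hK.continuous_upperCoeff.comp continuous_neg)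

theorem coneOscillation_nonneg (hK : IsOrderUnit K v) (w : E) : 0 ≤ coneOscillation K v w := by
  simpa [hK.upperCoeff_zero, coneOscillation] using hK.upperCoeff_add_le w (-w)

theorem coneOscillation_add_smul (hK : IsOrderUnit K v) (w : E) (c : ℝ) :
    coneOscillation K v (w + c • v) = coneOscillation K v w := by
  rw [coneOscillation, coneOscillation, neg_add, ← neg_smul, hK.upperCoeff_add_smul,
    hK.upperCoeff_add_smul]
  ring

theorem coneOscillation_eq_zero_iff (hK : IsOrderUnit K v) {w : E} :
    coneOscillation K v w = 0 ↔ w ∈ ℝ ∙ v := by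
  rw [Submodule.mem_span_singleton]
  constructor
  · intro h
    refine ⟨upperCoeff K v w, ?_⟩
    have hneg : -(upperCoeff K v w • v - w) ∈ K := by
      rw [coneOscillation, add_eq_zero_iff_eq_neg'] at h
      convert hK.smul_upperCoeff_sub_mem (-w) using 1
      rw [h, neg_smul]
      abel
    exact sub_eq_zero.1 (hK.eq_zero_of_neg_mem _ (hK.smul_upperCoeff_sub_mem w) hneg)
  · rintro ⟨a, rfl⟩
    simpa [hK.upperCoeff_zero, coneOscillation] using hK.coneOscillation_add_smul 0 a

end IsOrderUnit

theorem LocallyLipschitzOn.exists_lipschitzOnWith_ball_inter {α β : Type*} [PseudoMetricSpace α]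
    [PseudoMetricSpace β] {X s : Set α} {f : α → β} (hf : LocallyLipschitzOn X f)
    (hs : IsCompact s) (hsX : s ⊆ X) :
    ∃ ε > 0, ∃ L, ∀ x ∈ s, LipschitzOnWith L f (Metric.ball x ε ∩ X) := by
  have hloc : ∀ x : s, ∃ L, ∃ W : Set α, IsOpen W ∧ (x : α) ∈ W ∧ LipschitzOnWith L f (W ∩ X) := by
    rintro ⟨x, hx⟩
    obtain ⟨L, U, hU, hLU⟩ := hf (hsX hx)
    obtain ⟨W, hWo, hxW, hWU⟩ := mem_nhdsWithin.1 hU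
    exact ⟨L, W, hWo, hxW, hLU.mono hWU⟩
  choose L W hWo hxW hWL using hloc
  obtain ⟨t, ht⟩ := hs.elim_finite_subcover W hWo fun x hx => mem_iUnion.2 ⟨⟨x, hx⟩, hxW _⟩
  have hcover : s ⊆ ⋃ i : t, W i := fun y hy => by
    obtain ⟨i, hi, hyi⟩ := mem_iUnion₂.1 (ht hy)
    exact mem_iUnion.2 ⟨⟨i, hi⟩, hyi⟩
  obtain ⟨ε, hε, hball⟩ := lebesgue_number_lemma_of_metric hs (fun i : t => hWo i) hcover
  refine ⟨ε, hε, t.sup L, fun x hx => ?_⟩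
  obtain ⟨i, hi⟩ := hball x hx
  exact ((hWL i).mono (inter_subset_inter_left X hi)).weaken (Finset.le_sup i.2)

theorem forall_lt_of_continuousOn_Icc {F : ℝ → ℝ} {a b c : ℝ} (hF : ContinuousOn F (Icc a b))
    (h : ∀ τ ∈ Icc a b, (∀ t ∈ Ico a τ, F t < c) → F τ < c) : ∀ t ∈ Icc a b, F t < c := by
  by_contra! hbad
  have hB : IsClosed (Icc a b ∩ F ⁻¹' Ici c) :=
    hF.preimage_isClosed_of_isClosed isClosed_Icc isClosed_Ici
  have hbdd : BddBelow (Icc a b ∩ F ⁻¹' Ici c) := ⟨a, fun t ht => ht.1.1⟩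
  obtain ⟨t₀, ht₀, hFt₀⟩ := hbad
  obtain ⟨hτ, hFτ⟩ := hB.csInf_mem ⟨t₀, ht₀, hFt₀⟩ hbdd
  refine (h _ hτ fun t ht => ?_).not_ge hFτ
  by_contra! hct
  exact (csInf_le hbdd ⟨⟨ht.1, ht.2.le.trans hτ.2⟩, hct⟩).not_gt ht.2

structure IsSolutionOn (X : Set E) (f : E → E) (T : ℝ) (g : ℝ → E) : Prop where
  continuousOn : ContinuousOn g (Icc 0 T)
  mem : ∀ t ∈ Icc 0 T, g t ∈ X
  hasDerivWithinAt : ∀ t ∈ Ico 0 T, HasDerivWithinAt g (f (g t)) (Ici t) t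

namespace IsSolutionOn

variable {X : Set E} {f : E → E} {T : ℝ} {g h : ℝ → E}

/-- On a tube around `g` the field is uniformly Lipschitz (compactness), and Grönwall keeps nearby
solutions inside the tube. -/
theorem exists_dist_le_mul_dist (hf : LocallyLipschitzOn X f) (hg : IsSolutionOn X f T g) :
    ∃ κ > 0, ∃ C, ∀ h, IsSolutionOn X f T h → dist (g 0) (h 0) ≤ κ →
      ∀ t ∈ Icc 0 T, dist (g t) (h t) ≤ C * dist (g 0) (h 0) := by
  obtain ⟨ε, hε, L, hL⟩ := hf.exists_lipschitzOnWith_ball_inter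
    (isCompact_Icc.image_of_continuousOn hg.continuousOn) (image_subset_iff.2 hg.mem)
  set C := Real.exp (L * T)
  have hC : 0 < C := Real.exp_pos _
  refine ⟨ε / (2 * C), by positivity, C, fun h hh hκ => ?_⟩
  have gronwall : ∀ τ ∈ Icc 0 T, (∀ t ∈ Ico 0 τ, dist (g t) (h t) < ε) →
      dist (g τ) (h τ) ≤ C * dist (g 0) (h 0) := by
    intro τ hτ hclose
    have hIcc : Icc 0 τ ⊆ Icc 0 T := Icc_subset_Icc_right hτ.2
    have hIco : Ico 0 τ ⊆ Icc 0 T := Ico_subset_Icc_self.trans hIcc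
    have hderiv : ∀ {k : ℝ → E}, IsSolutionOn X f T k →
        ∀ t ∈ Ico 0 τ, HasDerivWithinAt k (f (k t)) (Ici t) t :=
      fun hk t ht => hk.hasDerivWithinAt t (Ico_subset_Ico_right hτ.2 ht)
    have hbound := dist_le_of_trajectories_ODE_of_mem (v := fun _ => f)
      (s := fun t => Metric.ball (g t) ε ∩ X) (K := L)
      (fun t ht => hL _ (mem_image_of_mem g (hIco ht))) (hg.continuousOn.mono hIcc) (hderiv hg)
      (fun t ht => ⟨Metric.mem_ball_self hε, hg.mem t (hIco ht)⟩) (hh.continuousOn.mono hIcc)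
      (hderiv hh) (fun t ht => ⟨by rw [Metric.mem_ball, dist_comm]; exact hclose t ht,
        hh.mem t (hIco ht)⟩) le_rfl τ (right_mem_Icc.2 hτ.1)
    calc dist (g τ) (h τ) ≤ dist (g 0) (h 0) * Real.exp (L * (τ - 0)) := hbound
      _ ≤ dist (g 0) (h 0) * C := by
        gcongr
        exact Real.exp_le_exp.2 (mul_le_mul_of_nonneg_left (by linarith [hτ.2]) L.2)
      _ = C * dist (g 0) (h 0) := mul_comm _ _
  have hsmall : C * dist (g 0) (h 0) < ε :=
    calc C * dist (g 0) (h 0) ≤ C * (ε / (2 * C)) := by gcongr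
      _ < ε := by field_simp; linarith
  have hclose : ∀ t ∈ Icc 0 T, dist (g t) (h t) < ε :=
    forall_lt_of_continuousOn_Icc
      (continuous_dist.comp_continuousOn (hg.continuousOn.prodMk hh.continuousOn))
      fun τ hτ hlt => (gronwall τ hτ hlt).trans_lt hsmall
  exact fun t ht => gronwall t ht fun s hs => hclose s ⟨hs.1, hs.2.le.trans ht.2⟩

theorem eqOn (hf : LocallyLipschitzOn X f) (hg : IsSolutionOn X f T g)
    (hh : IsSolutionOn X f T h) (h0 : g 0 = h 0) : EqOn g h (Icc 0 T) := fun t ht => by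
  obtain ⟨κ, hκ, C, hC⟩ := hg.exists_dist_le_mul_dist hf
  have := hC h hh (by rw [h0, dist_self]; exact hκ.le) t ht
  rwa [h0, dist_self, mul_zero, dist_le_zero] at this

end IsSolutionOn

structure IsForwardFlow (X : Set E) (f : E → E) (φ : ℝ → E → E) : Prop where
  locallyLipschitzOn : LocallyLipschitzOn X f
  apply_zero : ∀ ξ ∈ X, φ 0 ξ = ξ
  mem : ∀ ξ ∈ X, ∀ t : ℝ, 0 ≤ t → φ t ξ ∈ X
  hasDerivWithinAt : ∀ ξ ∈ X, ∀ t : ℝ, 0 ≤ t →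
    HasDerivWithinAt (fun s => φ s ξ) (f (φ t ξ)) (Ici 0) t

namespace IsForwardFlow

variable {X : Set E} {f : E → E} {φ : ℝ → E → E} {ξ : E}

theorem isSolutionOn (hφ : IsForwardFlow X f φ) (hξ : ξ ∈ X) (T : ℝ) :
    IsSolutionOn X f T (fun t => φ t ξ) where
  continuousOn t ht := (hφ.hasDerivWithinAt ξ hξ t ht.1).continuousWithinAt.mono fun _ hs => hs.1
  mem t ht := hφ.mem ξ hξ t ht.1
  hasDerivWithinAt t ht := (hφ.hasDerivWithinAt ξ hξ t ht.1).mono (Ici_subset_Ici.2 ht.1)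

theorem eq_of_isSolutionOn (hφ : IsForwardFlow X f φ) {T : ℝ} {g : ℝ → E}
    (hg : IsSolutionOn X f T g) (hξ : ξ ∈ X) (hg0 : g 0 = ξ) : ∀ t ∈ Icc 0 T, g t = φ t ξ :=
  hg.eqOn hφ.locallyLipschitzOn (hφ.isSolutionOn hξ T) (by rw [hg0, hφ.apply_zero ξ hξ])

theorem apply_add (hφ : IsForwardFlow X f φ) (hξ : ξ ∈ X) {s t : ℝ} (hs : 0 ≤ s) (ht : 0 ≤ t) :
    φ (t + s) ξ = φ t (φ s ξ) := by
  refine hφ.eq_of_isSolutionOn (g := fun u => φ (u + s) ξ) ⟨?_, ?_, ?_⟩ (hφ.mem ξ hξ s hs)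
    (by rw [zero_add]) t ⟨ht, le_rfl⟩
  · exact (hφ.isSolutionOn hξ (t + s)).continuousOn.comp (continuous_add_const s).continuousOn
      fun u hu => ⟨add_nonneg hu.1 hs, by linarith [hu.2]⟩
  · exact fun u hu => hφ.mem ξ hξ (u + s) (add_nonneg hu.1 hs)
  · intro u hu
    have hshift : HasDerivWithinAt (· + s) (1 : ℝ) (Ici u) u :=
      (hasDerivWithinAt_id u (Ici u)).add_const s
    simpa [Function.comp_def] using
      (hφ.hasDerivWithinAt ξ hξ (u + s) (add_nonneg hu.1 hs)).scomp u hshift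
        fun u' hu' => add_nonneg (hu.1.trans hu') hs

theorem continuousOn (hφ : IsForwardFlow X f φ) {t : ℝ} (ht : 0 ≤ t) : ContinuousOn (φ t) X := by
  intro ξ hξ
  obtain ⟨κ, hκ, C, hC⟩ := (hφ.isSolutionOn hξ t).exists_dist_le_mul_dist hφ.locallyLipschitzOn
  have hbound : ∀ᶠ x in 𝓝[X] ξ, dist (φ t x) (φ t ξ) ≤ C * dist ξ x := by
    filter_upwards [self_mem_nhdsWithin, nhdsWithin_le_nhds (Metric.closedBall_mem_nhds ξ hκ)]
      with x hx hxκ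
    have := hC _ (hφ.isSolutionOn hx t)
      (by rwa [hφ.apply_zero ξ hξ, hφ.apply_zero x hx, dist_comm]) t ⟨ht, le_rfl⟩
    rwa [hφ.apply_zero ξ hξ, hφ.apply_zero x hx, dist_comm] at this
  have hlim : Tendsto (fun x => C * dist ξ x) (𝓝[X] ξ) (𝓝 0) := by
    refine tendsto_nhdsWithin_of_tendsto_nhds ?_
    simpa using ((tendsto_const_nhds (x := ξ)).dist (tendsto_id (x := 𝓝 ξ))).const_mul C
  exact tendsto_iff_dist_tendsto_zero.2
    (squeeze_zero' (Eventually.of_forall fun _ => dist_nonneg) hbound hlim)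

end IsForwardFlow

theorem HasDerivWithinAt.mem_of_forall_sub_mem {g : ℝ → E} {g' : E} {a : ℝ} {P : Submodule ℝ E}
    (hP : IsClosed (P : Set E)) (hg : HasDerivWithinAt g g' (Ici a) a)
    (h : ∀ s > a, g s - g a ∈ P) : g' ∈ P := by
  rw [hasDerivWithinAt_iff_tendsto_slope, Ici_sdiff_left] at hg
  refine hP.mem_of_tendsto hg (eventually_nhdsWithin_of_forall fun s hs => ?_)
  rw [slope_def_module]
  exact P.smul_mem _ (h s hs)

structure IsMonotoneTranslationFlow (K X : Set E) (f : E → E) (φ : ℝ → E → E) (v : E) : Prop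
    extends IsForwardFlow X f φ, IsOrderUnit K v where
  add_smul_mem : ∀ x ∈ X, ∀ c : ℝ, x + c • v ∈ X
  strongMono : ∀ ξ₁ ∈ X, ∀ ξ₂ ∈ X, ∀ t : ℝ, 0 < t →
    ξ₁ - ξ₂ ∈ K → ξ₁ ≠ ξ₂ → φ t ξ₁ - φ t ξ₂ ∈ interior K
  apply_add_smul : ∀ ξ ∈ X, ∀ c t : ℝ, 0 ≤ t → φ t (ξ + c • v) = φ t ξ + c • v

namespace IsMonotoneTranslationFlow

variable {K X : Set E} {f : E → E} {φ : ℝ → E → E} {v : E}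

theorem f_add_smul (S : IsMonotoneTranslationFlow K X f φ v) {x : E} (hx : x ∈ X) (c : ℝ) :
    f (x + c • v) = f x := by
  have hxc := S.add_smul_mem x hx c
  have h₁ := S.hasDerivWithinAt _ hxc 0 le_rfl
  have h₂ := ((S.hasDerivWithinAt x hx 0 le_rfl).add_const (c • v)).congr_of_mem
    (fun s hs => S.apply_add_smul x hx c s hs) self_mem_Ici
  rw [S.apply_zero _ hxc] at h₁
  rw [S.apply_zero x hx] at h₂
  exact (uniqueDiffOn_Ici 0 0 self_mem_Ici).eq_deriv _ h₁ h₂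

theorem apply_eq_add_smul (S : IsMonotoneTranslationFlow K X f φ v) {p : E} (hp : p ∈ X) {r : ℝ}
    (hr : f p = r • v) {t : ℝ} (ht : 0 ≤ t) : φ t p = p + (t * r) • v := by
  refine (S.eq_of_isSolutionOn (g := fun u => p + (u * r) • v) ⟨?_, ?_, ?_⟩ hp (by simp) t
    ⟨ht, le_rfl⟩).symm
  · fun_prop
  · exact fun u _ => S.add_smul_mem p hp _
  · intro u _
    rw [S.f_add_smul hp, hr]
    simpa using (((hasDerivWithinAt_id u (Ici u)).mul_const r).smul_const v).const_add p

theorem upperCoeff_apply_sub_le (S : IsMonotoneTranslationFlow K X f φ v) {x y : E} (hx : x ∈ X)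
    (hy : y ∈ X) {t : ℝ} (ht : 0 ≤ t) :
    upperCoeff K v (φ t y - φ t x) ≤ upperCoeff K v (y - x) := by
  set l := upperCoeff K v (y - x)
  have hle : (x + l • v) - y ∈ K := by
    simpa [sub_sub_eq_add_sub, add_comm] using S.smul_upperCoeff_sub_mem (y - x)
  have hmono : φ t (x + l • v) - φ t y ∈ K := by
    rcases ht.eq_or_lt with rfl | ht
    · rwa [S.apply_zero _ (S.add_smul_mem x hx l), S.apply_zero y hy]
    rcases eq_or_ne (x + l • v) y with heq | hne
    · simpa [heq] using S.zero_mem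
    · exact interior_subset (S.strongMono _ (S.add_smul_mem x hx l) y hy t ht hle hne)
  rw [S.upperCoeff_le_iff]
  simpa [S.apply_add_smul x hx l t ht, sub_sub_eq_add_sub, add_comm] using hmono

theorem upperCoeff_apply_sub_lt (S : IsMonotoneTranslationFlow K X f φ v) {x y : E} (hx : x ∈ X)
    (hy : y ∈ X) (hne : y - x ≠ upperCoeff K v (y - x) • v) {t : ℝ} (ht : 0 < t) :
    upperCoeff K v (φ t y - φ t x) < upperCoeff K v (y - x) := by
  set l := upperCoeff K v (y - x)
  have hle : (x + l • v) - y ∈ K := by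
    simpa [sub_sub_eq_add_sub, add_comm] using S.smul_upperCoeff_sub_mem (y - x)
  have hint := S.strongMono _ (S.add_smul_mem x hx l) y hy t ht hle fun h => hne (by
    rw [← h]; abel)
  refine S.upperCoeff_lt_of_mem_interior ?_
  simpa [S.apply_add_smul x hx l t ht.le, sub_sub_eq_add_sub, add_comm] using hint

theorem coneOscillation_apply_sub_le (S : IsMonotoneTranslationFlow K X f φ v) {x y : E}
    (hx : x ∈ X) (hy : y ∈ X) {t : ℝ} (ht : 0 ≤ t) :
    coneOscillation K v (φ t y - φ t x) ≤ coneOscillation K v (y - x) := by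
  simp only [coneOscillation, neg_sub]
  exact add_le_add (S.upperCoeff_apply_sub_le hx hy ht) (S.upperCoeff_apply_sub_le hy hx ht)

theorem coneOscillation_apply_sub_lt (S : IsMonotoneTranslationFlow K X f φ v) {x y : E}
    (hx : x ∈ X) (hy : y ∈ X) (hosc : coneOscillation K v (y - x) ≠ 0) {t : ℝ} (ht : 0 < t) :
    coneOscillation K v (φ t y - φ t x) < coneOscillation K v (y - x) := by
  have hne : y - x ≠ upperCoeff K v (y - x) • v := fun h =>
    hosc (S.coneOscillation_eq_zero_iff.2 (Submodule.mem_span_singleton.2 ⟨_, h.symm⟩))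
  simp only [coneOscillation, neg_sub]
  exact add_lt_add_of_lt_of_le (S.upperCoeff_apply_sub_lt hx hy hne ht)
    (S.upperCoeff_apply_sub_le hy hx ht.le)

theorem sub_mem_span_of_eq_smul (S : IsMonotoneTranslationFlow K X f φ v) {p q : E} (hp : p ∈ X)
    (hq : q ∈ X) {rp rq : ℝ} (hfp : f p = rp • v) (hfq : f q = rq • v) : q - p ∈ ℝ ∙ v := by
  rw [← S.coneOscillation_eq_zero_iff]
  by_contra hosc
  have hlt := S.coneOscillation_apply_sub_lt hp hq hosc one_pos
  rw [S.apply_eq_add_smul hp hfp zero_le_one, S.apply_eq_add_smul hq hfq zero_le_one,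
    show q + (1 * rq) • v - (p + (1 * rp) • v) = q - p + (rq - rp) • v by
      rw [sub_smul]; simp only [one_mul]; abel, S.coneOscillation_add_smul] at hlt
  exact lt_irrefl _ hlt

theorem exists_tendsto_coneOscillation (S : IsMonotoneTranslationFlow K X f φ v) {x y : E}
    (hx : x ∈ X) (hy : y ∈ X) :
    ∃ δ, Tendsto (fun t => coneOscillation K v (φ t y - φ t x)) atTop (𝓝 δ) := by
  set G := fun t => coneOscillation K v (φ (max t 0) y - φ (max t 0) x)
  have hanti : Antitone G := by
    intro t₁ t₂ h
    have h₁ := le_max_right t₁ 0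
    have hd : 0 ≤ max t₂ 0 - max t₁ 0 := sub_nonneg.2 (max_le_max h le_rfl)
    simp only [G]
    rw [← sub_add_cancel (max t₂ 0) (max t₁ 0), S.apply_add hx h₁ hd, S.apply_add hy h₁ hd]
    exact S.coneOscillation_apply_sub_le (S.mem x hx _ h₁) (S.mem y hy _ h₁) hd
  have hbdd : BddBelow (range G) :=
    ⟨0, forall_mem_range.2 fun t => S.coneOscillation_nonneg _⟩
  refine ⟨_, (tendsto_atTop_ciInf hanti hbdd).congr' ?_⟩
  filter_upwards [eventually_ge_atTop 0] with t ht
  simp only [G, max_eq_left ht]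

variable {ι : Type*} {l : Filter ι} {u c : ι → ℝ} {ξ q : E}

theorem mem_of_tendsto (S : IsMonotoneTranslationFlow K X f φ v) [l.NeBot] (hX : IsClosed X)
    (hξ : ξ ∈ X) (hu : Tendsto u l atTop) (hq : Tendsto (fun i => φ (u i) ξ + c i • v) l (𝓝 q)) :
    q ∈ X :=
  hX.mem_of_tendsto hq <|
    (hu.eventually_ge_atTop 0).mono fun _ hi => S.add_smul_mem _ (S.mem ξ hξ _ hi) _

/-- Translation invariance turns the orbits of the translates into time shifts of the orbits of `ξ`
and `φ s ξ`; pass to the limit by continuity of `φ w`. -/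
theorem coneOscillation_apply_sub_eq_of_tendsto (S : IsMonotoneTranslationFlow K X f φ v)
    [l.NeBot] (hξ : ξ ∈ X) (hu : Tendsto u l atTop)
    (hq : Tendsto (fun i => φ (u i) ξ + c i • v) l (𝓝 q)) (hqX : q ∈ X) {s δ : ℝ} (hs : 0 ≤ s)
    (hδ : Tendsto (fun t => coneOscillation K v (φ t (φ s ξ) - φ t ξ)) atTop (𝓝 δ)) {w : ℝ}
    (hw : 0 ≤ w) : coneOscillation K v (φ w (φ s q) - φ w q) = δ := by
  have hu0 : ∀ᶠ i in l, 0 ≤ u i := hu.eventually_ge_atTop 0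
  have hpX : ∀ᶠ i in l, φ (u i) ξ + c i • v ∈ X :=
    hu0.mono fun i hi => S.add_smul_mem _ (S.mem ξ hξ _ hi) _
  have hshift : ∀ {t : ℝ}, 0 ≤ t → ∀ᶠ i in l,
      φ t (φ (u i) ξ + c i • v) = φ (t + u i) ξ + c i • v := fun ht =>
    hu0.mono fun i hi => by rw [S.apply_add_smul _ (S.mem ξ hξ _ hi) _ _ ht, S.apply_add hξ hi ht]
  have hcont : ∀ {t : ℝ}, 0 ≤ t → ∀ {z : E}, z ∈ X → ∀ {y : ι → E}, Tendsto y l (𝓝 z) →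
      (∀ᶠ i in l, y i ∈ X) → Tendsto (fun i => φ t (y i)) l (𝓝 (φ t z)) :=
    fun ht z hz _ hy hyX =>
      (S.continuousOn ht z hz).tendsto.comp (tendsto_nhdsWithin_iff.2 ⟨hy, hyX⟩)
  have hsq := hcont hs hqX hq hpX
  have hlim := (S.continuous_coneOscillation.tendsto _).comp
    ((hcont hw (S.mem q hqX s hs) hsq (hpX.mono fun i hi => S.mem _ hi s hs)).sub
      (hcont hw hqX hq hpX))
  refine tendsto_nhds_unique hlim ((hδ.comp (tendsto_atTop_add_const_left _ w hu)).congr' ?_)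
  filter_upwards [hu0, hshift hs, hshift hw] with i hi hsi hwi
  rw [Function.comp_apply, Function.comp_apply, hsi, hwi,
    S.apply_add_smul _ (S.mem ξ hξ _ (add_nonneg hs hi)) _ _ hw, add_sub_add_right_eq_sub,
    ← S.apply_add hξ (add_nonneg hs hi) hw, ← S.apply_add hξ hs (add_nonneg hw hi)]
  congr 3
  ring

theorem f_mem_span_of_tendsto (S : IsMonotoneTranslationFlow K X f φ v) [l.NeBot]
    (hξ : ξ ∈ X) (hu : Tendsto u l atTop) (hq : Tendsto (fun i => φ (u i) ξ + c i • v) l (𝓝 q))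
    (hqX : q ∈ X) : f q ∈ ℝ ∙ v := by
  have hderiv := S.hasDerivWithinAt q hqX 0 le_rfl
  rw [S.apply_zero q hqX] at hderiv
  refine hderiv.mem_of_forall_sub_mem (Submodule.closed_of_finiteDimensional _) fun s hs => ?_
  rw [S.apply_zero q hqX, ← S.coneOscillation_eq_zero_iff]
  have hsq := S.mem q hqX s hs.le
  obtain ⟨δ, hδ⟩ := S.exists_tendsto_coneOscillation hξ (S.mem ξ hξ s hs.le)
  have h₀ := S.coneOscillation_apply_sub_eq_of_tendsto hξ hu hq hqX hs.le hδ le_rfl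
  have hₛ := S.coneOscillation_apply_sub_eq_of_tendsto hξ hu hq hqX hs.le hδ hs.le
  rw [S.apply_zero _ hsq, S.apply_zero q hqX] at h₀
  by_contra hosc
  linarith [S.coneOscillation_apply_sub_lt hqX hsq hosc hs]

end IsMonotoneTranslationFlow

theorem eq_of_sub_mem_span_of_inner_eq_zero {F : Type*} [NormedAddCommGroup F]
    [InnerProductSpace ℝ F] {v p q : F} (hpq : q - p ∈ ℝ ∙ v) (hp : inner ℝ v p = 0)
    (hq : inner ℝ v q = 0) : p = q := by
  have hperp : q - p ∈ (ℝ ∙ v)ᗮ := by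
    rw [Submodule.mem_orthogonal_singleton_iff_inner_right, inner_sub_right, hp, hq, sub_zero]
  have := Submodule.mem_inf.2 ⟨hpq, hperp⟩
  rw [Submodule.inf_orthogonal_eq_bot, Submodule.mem_bot, sub_eq_zero] at this
  exact this.symm

theorem piProj_eq_add_smul {n : ℕ} (v x : EuclideanSpace ℝ (Fin n)) :
    piProj v x = x + (-inner ℝ v x) • v := by
  rw [piProj, neg_smul, sub_eq_add_neg]

theorem inner_piProj {n : ℕ} {v : EuclideanSpace ℝ (Fin n)} (hv : ‖v‖ = 1)
    (x : EuclideanSpace ℝ (Fin n)) : inner ℝ v (piProj v x) = 0 := by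
  rw [piProj, inner_sub_right, real_inner_smul_right, real_inner_self_eq_norm_sq, hv]
  ring

/-- An equilibrium of the projected system `ẋ = (I - v vᵀ) f(x)` on `X ∩ v^⊥`. -/
def IsProjectedEquilibrium {F : Type*} [NormedAddCommGroup F] [InnerProductSpace ℝ F]
    (X : Set F) (f : F → F) (v p : F) : Prop :=
  p ∈ X ∧ inner ℝ v p = 0 ∧ ∃ r : ℝ, f p = r • v

namespace IsMonotoneTranslationFlow

theorem eq_of_isProjectedEquilibrium {F : Type*} [NormedAddCommGroup F] [InnerProductSpace ℝ F]
    {K X : Set F} {f : F → F} {φ : ℝ → F → F} {v p q : F}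
    (S : IsMonotoneTranslationFlow K X f φ v) (hp : IsProjectedEquilibrium X f v p)
    (hq : IsProjectedEquilibrium X f v q) : p = q := by
  obtain ⟨hpX, hpv, rp, hfp⟩ := hp
  obtain ⟨hqX, hqv, rq, hfq⟩ := hq
  exact eq_of_sub_mem_span_of_inner_eq_zero (S.sub_mem_span_of_eq_smul hpX hqX hfp hfq) hpv hqv

theorem isProjectedEquilibrium_of_mapClusterPt {n : ℕ} {K X : Set (EuclideanSpace ℝ (Fin n))}
    {f : EuclideanSpace ℝ (Fin n) → EuclideanSpace ℝ (Fin n)}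
    {φ : ℝ → EuclideanSpace ℝ (Fin n) → EuclideanSpace ℝ (Fin n)}
    {v ξ q : EuclideanSpace ℝ (Fin n)} (S : IsMonotoneTranslationFlow K X f φ v)
    (hX : IsClosed X) (hv : ‖v‖ = 1) (hξ : ξ ∈ X)
    (hq : MapClusterPt q atTop fun t => piProj v (φ t ξ)) : IsProjectedEquilibrium X f v q := by
  obtain ⟨ψ, hψq, hψ⟩ := hq.exists_seq_tendsto
  have hlim : Tendsto (fun i => φ (ψ i) ξ + (-inner ℝ v (φ (ψ i) ξ)) • v) atTop (𝓝 q) := by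
    simpa only [Function.comp_def, piProj_eq_add_smul] using hψq
  have hqX := S.mem_of_tendsto hX hξ hψ hlim
  obtain ⟨r, hr⟩ := Submodule.mem_span_singleton.1 (S.f_mem_span_of_tendsto hξ hψ hlim hqX)
  refine ⟨hqX, ?_, r, hr.symm⟩
  exact (isClosed_eq (continuous_const.inner continuous_id) continuous_const).mem_of_tendsto hψq
    (Eventually.of_forall fun _ => inner_piProj hv _)

end IsMonotoneTranslationFlow

theorem stmt0_general {n : ℕ} (K X : Set (EuclideanSpace ℝ (Fin n)))
    (f : EuclideanSpace ℝ (Fin n) → EuclideanSpace ℝ (Fin n))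
    (φ : ℝ → EuclideanSpace ℝ (Fin n) → EuclideanSpace ℝ (Fin n))
    (v : EuclideanSpace ℝ (Fin n))
    -- K is a closed pointed convex cone with nonempty interior
    (hKclosed : IsClosed K) (hKconv : Convex ℝ K)
    (hKcone : ∀ c : ℝ, 0 ≤ c → ∀ x ∈ K, c • x ∈ K)
    (hKpointed : ∀ x ∈ K, -x ∈ K → x = 0)
    (hv : v ∈ interior K) (hvnorm : ‖v‖ = 1)
    -- X is closed, the closure of its interior, and invariant under translations by v
    (hXclosed : IsClosed X)
    (hXtrans : ∀ x ∈ X, ∀ lam : ℝ, x + lam • v ∈ X)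
    -- f is locally Lipschitz on X
    (hf : ∀ x ∈ X, ∃ L : NNReal, ∃ U ∈ nhdsWithin x X, LipschitzOnWith L f U)
    -- φ is the forward complete flow of ẋ = f(x) on X
    (hφ0 : ∀ ξ ∈ X, φ 0 ξ = ξ)
    (hφX : ∀ ξ ∈ X, ∀ t : ℝ, 0 ≤ t → φ t ξ ∈ X)
    (hφode : ∀ ξ ∈ X, ∀ t : ℝ, 0 ≤ t →
      HasDerivWithinAt (fun s => φ s ξ) (f (φ t ξ)) (Set.Ici 0) t)
    -- strong monotonicity: ξ₁ ≻ ξ₂ ⟹ φ_t(ξ₁) ≫ φ_t(ξ₂) for t > 0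
    (hmono : ∀ ξ₁ ∈ X, ∀ ξ₂ ∈ X, ∀ t : ℝ, 0 < t →
      ξ₁ - ξ₂ ∈ K → ξ₁ ≠ ξ₂ → φ t ξ₁ - φ t ξ₂ ∈ interior K)
    -- translation invariance along v
    (htrans : ∀ ξ ∈ X, ∀ lam t : ℝ, 0 ≤ t → φ t (ξ + lam • v) = φ t ξ + lam • v) :
    -- every solution bounded modulo v has π_v(φ_t(ξ)) converging to an equilibrium
    (∀ ξ ∈ X, (∃ M : ℝ, ∀ t : ℝ, 0 ≤ t → ‖piProj v (φ t ξ)‖ ≤ M) →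
      ∃ p : EuclideanSpace ℝ (Fin n), p ∈ X ∧ (inner ℝ v p : ℝ) = 0 ∧
        (∃ r : ℝ, f p = r • v) ∧
        Tendsto (fun t => piProj v (φ t ξ)) atTop (𝓝 p)) ∧
    -- moreover, the equilibrium of the projected system is unique
    (∀ p₁ p₂ : EuclideanSpace ℝ (Fin n),
      p₁ ∈ X → (inner ℝ v p₁ : ℝ) = 0 → (∃ r : ℝ, f p₁ = r • v) →
      p₂ ∈ X → (inner ℝ v p₂ : ℝ) = 0 → (∃ r : ℝ, f p₂ = r • v) → p₁ = p₂) := by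
  have S : IsMonotoneTranslationFlow K X f φ v :=
    { locallyLipschitzOn := fun x hx => hf x hx, apply_zero := hφ0, mem := hφX,
      hasDerivWithinAt := hφode, isClosed := hKclosed, convex := hKconv, smul_mem := hKcone,
      eq_zero_of_neg_mem := hKpointed, mem_interior := hv, ne_zero := by rintro rfl; simp at hvnorm,
      add_smul_mem := hXtrans, strongMono := hmono, apply_add_smul := htrans }
  refine ⟨fun ξ hξ ⟨M, hM⟩ => ?_, fun p₁ p₂ hp₁ hi₁ hr₁ hp₂ hi₂ hr₂ =>
    S.eq_of_isProjectedEquilibrium ⟨hp₁, hi₁, hr₁⟩ ⟨hp₂, hi₂, hr₂⟩⟩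
  have hbdd : ∀ᶠ t in atTop, piProj v (φ t ξ) ∈ Metric.closedBall 0 M :=
    (eventually_ge_atTop 0).mono fun t ht => mem_closedBall_zero_iff.2 (hM t ht)
  obtain ⟨q, -, hq⟩ := (isCompact_closedBall 0 M).exists_mapClusterPt (le_principal_iff.2 hbdd)
  have hqe := S.isProjectedEquilibrium_of_mapClusterPt hXclosed hvnorm hξ hq
  refine ⟨q, hqe.1, hqe.2.1, hqe.2.2, ?_⟩
  exact (isCompact_closedBall 0 M).tendsto_nhds_of_unique_mapClusterPt hbdd fun x _ hx =>
    S.eq_of_isProjectedEquilibrium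
      (S.isProjectedEquilibrium_of_mapClusterPt hXclosed hvnorm hξ hx) hqe

/-- a strongly monotone, forward complete system `ẋ = f(x)` on `X`,
translation invariant along the unit vector `v ∈ interior K`, with `X` closed and
invariant under translations by `v`, is such that every solution bounded modulo `v`
has `π_v(φ_t(ξ))` converging to an equilibrium `p ∈ X ∩ v^⊥` of the projected system
(`f(p) ∈ span{v}`); moreover this equilibrium is unique. -/
theorem stmt0 {n : ℕ} (K X : Set (EuclideanSpace ℝ (Fin n)))
    (f : EuclideanSpace ℝ (Fin n) → EuclideanSpace ℝ (Fin n))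
    (φ : ℝ → EuclideanSpace ℝ (Fin n) → EuclideanSpace ℝ (Fin n))
    (v : EuclideanSpace ℝ (Fin n))
    -- K is a closed pointed convex cone with nonempty interior
    (hKclosed : IsClosed K) (hKconv : Convex ℝ K)
    (hKcone : ∀ c : ℝ, 0 ≤ c → ∀ x ∈ K, c • x ∈ K)
    (hKpointed : ∀ x ∈ K, -x ∈ K → x = 0)
    (hv : v ∈ interior K) (hvnorm : ‖v‖ = 1)
    -- X is closed, the closure of its interior, and invariant under translations by v
    (hXclosed : IsClosed X) (hXreg : X = closure (interior X))
    (hXtrans : ∀ x ∈ X, ∀ lam : ℝ, x + lam • v ∈ X)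
    -- f is locally Lipschitz on X
    (hf : ∀ x ∈ X, ∃ L : NNReal, ∃ U ∈ nhdsWithin x X, LipschitzOnWith L f U)
    -- φ is the forward complete flow of ẋ = f(x) on X
    (hφ0 : ∀ ξ ∈ X, φ 0 ξ = ξ)
    (hφX : ∀ ξ ∈ X, ∀ t : ℝ, 0 ≤ t → φ t ξ ∈ X)
    (hφode : ∀ ξ ∈ X, ∀ t : ℝ, 0 ≤ t →
      HasDerivWithinAt (fun s => φ s ξ) (f (φ t ξ)) (Set.Ici 0) t)
    -- strong monotonicity: ξ₁ ≻ ξ₂ ⟹ φ_t(ξ₁) ≫ φ_t(ξ₂) for t > 0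
    (hmono : ∀ ξ₁ ∈ X, ∀ ξ₂ ∈ X, ∀ t : ℝ, 0 < t →
      ξ₁ - ξ₂ ∈ K → ξ₁ ≠ ξ₂ → φ t ξ₁ - φ t ξ₂ ∈ interior K)
    -- translation invariance along v
    (htrans : ∀ ξ ∈ X, ∀ lam t : ℝ, 0 ≤ t → φ t (ξ + lam • v) = φ t ξ + lam • v) :
    -- every solution bounded modulo v has π_v(φ_t(ξ)) converging to an equilibrium
    (∀ ξ ∈ X, (∃ M : ℝ, ∀ t : ℝ, 0 ≤ t → ‖piProj v (φ t ξ)‖ ≤ M) →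
      ∃ p : EuclideanSpace ℝ (Fin n), p ∈ X ∧ (inner ℝ v p : ℝ) = 0 ∧
        (∃ r : ℝ, f p = r • v) ∧
        Tendsto (fun t => piProj v (φ t ξ)) atTop (𝓝 p)) ∧
    -- moreover, the equilibrium of the projected system is unique
    (∀ p₁ p₂ : EuclideanSpace ℝ (Fin n),
      p₁ ∈ X → (inner ℝ v p₁ : ℝ) = 0 → (∃ r : ℝ, f p₁ = r • v) →
      p₂ ∈ X → (inner ℝ v p₂ : ℝ) = 0 → (∃ r : ℝ, f p₂ = r • v) → p₁ = p₂) :=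
  stmt0_general K X f φ v hKclosed hKconv hKcone hKpointed hv hvnorm hXclosed hXtrans hf hφ0 hφX
    hφode hmono htrans
end

section
/- Let the strongly monotone, forward complete system ẋ = f(x) on X be translation invariant along the unit vector v ∈ interior(K), with X invariant under translations by v, and let V(x) = inf{α ∈ ℝ : x ⪯ αv}. Then for all ξ₁, ξ₂ ∈ X and all t > 0, V(φ_t(ξ₁) − φ_t(ξ₂)) ≤ V(ξ₁ − ξ₂), and the inequality is strict whenever ξ₁ − ξ₂ ∉ span{v}. -/
open Filter Topology Set

/-!
Let `c = V(ξ₁ - ξ₂)`. Since `K` is closed the infimum is attained, i.e. `ξ₁ ⪯ ξ₂ + c v`.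
By translation invariance `φ_t(ξ₂ + c v) = φ_t(ξ₂) + c v`, so if `ξ₁ ≠ ξ₂ + c v` strong
monotonicity gives `φ_t(ξ₁) ≪ φ_t(ξ₂) + c v`; as `c v - (φ_t(ξ₁) - φ_t(ξ₂))` is then an interior
point of `K`, a slightly smaller multiple of `v` still dominates, so `V(φ_t(ξ₁) - φ_t(ξ₂)) < c`.
If instead `ξ₁ = ξ₂ + c v`, translation invariance gives `φ_t(ξ₁) - φ_t(ξ₂) = ξ₁ - ξ₂`.
-/

/-- `V(x) = inf {α : x ⪯ α v}` where `x ⪯ y` iff `y - x ∈ K`. -/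
noncomputable def coneV {n : ℕ} (K : Set (EuclideanSpace ℝ (Fin n)))
    (v x : EuclideanSpace ℝ (Fin n)) : ℝ :=
  sInf {α : ℝ | α • v - x ∈ K}

section ConeLevels

variable {E : Type*} [AddCommGroup E] [Module ℝ E] [TopologicalSpace E]
  [IsTopologicalAddGroup E] [ContinuousSMul ℝ E] {K : Set E} {v : E}

theorem nonempty_setOf_smul_sub_mem
    (hKcone : ∀ c : ℝ, 0 ≤ c → ∀ x ∈ K, c • x ∈ K) (hv : v ∈ interior K) (x : E) :
    {α : ℝ | α • v - x ∈ K}.Nonempty := by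
  have hlim : Tendsto (fun t : ℝ => v - t • x) (𝓝[>] 0) (𝓝 v) := by
    simpa using (tendsto_const_nhds (x := v)).sub
      ((tendsto_id.smul_const x).mono_left (nhdsWithin_le_nhds (a := (0 : ℝ))))
  obtain ⟨t, hvt, ht⟩ :=
    ((hlim.eventually (mem_interior_iff_mem_nhds.mp hv)).and self_mem_nhdsWithin).exists
  refine ⟨t⁻¹, ?_⟩
  have hscaled := hKcone t⁻¹ (inv_nonneg.mpr ht.le) _ hvt
  rwa [smul_sub, smul_smul, inv_mul_cancel₀ ht.ne', one_smul] at hscaled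

theorem bddBelow_setOf_smul_sub_mem (hKclosed : IsClosed K)
    (hKcone : ∀ c : ℝ, 0 ≤ c → ∀ x ∈ K, c • x ∈ K) (hKpointed : ∀ x ∈ K, -x ∈ K → x = 0)
    (hvK : v ∈ K) (hv0 : v ≠ 0) (x : E) :
    BddBelow {α : ℝ | α • v - x ∈ K} := by
  have hneg : -v ∉ K := fun h => hv0 (hKpointed v hvK h)
  -- For `α < 0`, `α • v - x ∈ K` iff `-v - (-α)⁻¹ • x ∈ K`, and the latter tends to `-v ∉ K`.
  have hlim : Tendsto (fun α : ℝ => -v - (-α)⁻¹ • x) atBot (𝓝 (-v)) := by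
    simpa using (tendsto_const_nhds (x := -v)).sub
      ((tendsto_inv_atTop_zero.comp (tendsto_neg_atBot_atTop (G := ℝ))).smul_const x)
  obtain ⟨a, ha⟩ := eventually_atBot.mp
    ((hlim.eventually (hKclosed.isOpen_compl.mem_nhds hneg)).and (eventually_lt_atBot (0 : ℝ)))
  refine ⟨a, fun α hα => le_of_not_ge fun hαa => (ha α hαa).1 ?_⟩
  have hα0 : 0 < -α := neg_pos.mpr (ha α hαa).2
  have hscaled := hKcone (-α)⁻¹ (inv_nonneg.mpr hα0.le) _ hα
  rwa [smul_sub, smul_smul, show (-α)⁻¹ * α = -1 by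
    rw [inv_mul_eq_div, div_neg, div_self (neg_pos.mp hα0).ne], neg_one_smul] at hscaled

theorem sInf_smul_sub_mem (hKclosed : IsClosed K)
    (hKcone : ∀ c : ℝ, 0 ≤ c → ∀ x ∈ K, c • x ∈ K) (hKpointed : ∀ x ∈ K, -x ∈ K → x = 0)
    (hv : v ∈ interior K) (hv0 : v ≠ 0) (x : E) :
    sInf {α : ℝ | α • v - x ∈ K} • v - x ∈ K :=
  (hKclosed.preimage ((continuous_id.smul continuous_const).sub continuous_const)).csInf_mem
    (nonempty_setOf_smul_sub_mem hKcone hv x)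
    (bddBelow_setOf_smul_sub_mem hKclosed hKcone hKpointed (interior_subset hv) hv0 x)

theorem sInf_setOf_smul_sub_mem_lt (hKclosed : IsClosed K)
    (hKcone : ∀ c : ℝ, 0 ≤ c → ∀ x ∈ K, c • x ∈ K) (hKpointed : ∀ x ∈ K, -x ∈ K → x = 0)
    (hvK : v ∈ K) (hv0 : v ≠ 0) {x : E} {c : ℝ} (hc : c • v - x ∈ interior K) :
    sInf {α : ℝ | α • v - x ∈ K} < c := by
  have hlim : Tendsto (fun ε : ℝ => (c - ε) • v - x) (𝓝[>] 0) (𝓝 (c • v - x)) := by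
    have hcont : Continuous fun ε : ℝ => (c - ε) • v - x := by fun_prop
    simpa using (hcont.tendsto 0).mono_left nhdsWithin_le_nhds
  obtain ⟨ε, hεK, hε⟩ :=
    ((hlim.eventually (mem_interior_iff_mem_nhds.mp hc)).and self_mem_nhdsWithin).exists
  calc sInf {α : ℝ | α • v - x ∈ K}
      ≤ c - ε := csInf_le (bddBelow_setOf_smul_sub_mem hKclosed hKcone hKpointed hvK hv0 x)
        hεK
    _ < c := sub_lt_self c hε

end ConeLevels

theorem stmt4_general {n : ℕ} (K X : Set (EuclideanSpace ℝ (Fin n)))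
    (φ : ℝ → EuclideanSpace ℝ (Fin n) → EuclideanSpace ℝ (Fin n))
    (v : EuclideanSpace ℝ (Fin n))
    -- K is a closed pointed convex cone with nonempty interior
    (hKclosed : IsClosed K)
    (hKcone : ∀ c : ℝ, 0 ≤ c → ∀ x ∈ K, c • x ∈ K)
    (hKpointed : ∀ x ∈ K, -x ∈ K → x = 0)
    (hv : v ∈ interior K) (hvnorm : ‖v‖ = 1)
    -- X is closed, the closure of its interior, and invariant under translations by v
    (hXtrans : ∀ x ∈ X, ∀ lam : ℝ, x + lam • v ∈ X)
    -- strong monotonicity: ξ₁ ≻ ξ₂ ⟹ φ_t(ξ₁) ≫ φ_t(ξ₂) for t > 0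
    (hmono : ∀ ξ₁ ∈ X, ∀ ξ₂ ∈ X, ∀ t : ℝ, 0 < t →
      ξ₁ - ξ₂ ∈ K → ξ₁ ≠ ξ₂ → φ t ξ₁ - φ t ξ₂ ∈ interior K)
    -- translation invariance along v
    (htrans : ∀ ξ ∈ X, ∀ lam t : ℝ, 0 ≤ t → φ t (ξ + lam • v) = φ t ξ + lam • v) :
    ∀ ξ₁ ∈ X, ∀ ξ₂ ∈ X, ∀ t : ℝ, 0 < t →
      coneV K v (φ t ξ₁ - φ t ξ₂) ≤ coneV K v (ξ₁ - ξ₂) ∧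
      (ξ₁ - ξ₂ ∉ Submodule.span ℝ {v} →
        coneV K v (φ t ξ₁ - φ t ξ₂) < coneV K v (ξ₁ - ξ₂)) := by
  intro ξ₁ h₁ ξ₂ h₂ t ht
  have hv0 : v ≠ 0 := norm_ne_zero_iff.mp (hvnorm ▸ one_ne_zero)
  set c := coneV K v (ξ₁ - ξ₂)
  have hc : (ξ₂ + c • v) - ξ₁ ∈ K := by
    rw [show ξ₂ + c • v - ξ₁ = c • v - (ξ₁ - ξ₂) by abel]
    exact sInf_smul_sub_mem hKclosed hKcone hKpointed hv hv0 (ξ₁ - ξ₂)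
  have hφc : φ t (ξ₂ + c • v) = φ t ξ₂ + c • v := htrans ξ₂ h₂ c t ht.le
  by_cases hξ : ξ₂ + c • v = ξ₁
  · have hdiff : φ t ξ₁ - φ t ξ₂ = ξ₁ - ξ₂ := by
      rw [← hξ, hφc]; abel
    refine ⟨hdiff ▸ le_rfl, fun hspan => absurd ?_ hspan⟩
    rw [← hξ, add_sub_cancel_left]
    exact Submodule.smul_mem _ c (Submodule.mem_span_singleton_self v)
  · have hint := hmono _ (hXtrans ξ₂ h₂ c) ξ₁ h₁ t ht hc hξ
    rw [hφc, show φ t ξ₂ + c • v - φ t ξ₁ = c • v - (φ t ξ₁ - φ t ξ₂) by abel] at hint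
    have hlt : coneV K v (φ t ξ₁ - φ t ξ₂) < c :=
      sInf_setOf_smul_sub_mem_lt hKclosed hKcone hKpointed (interior_subset hv) hv0 hint
    exact ⟨hlt.le, fun _ => hlt⟩

/-- if the strongly monotone, forward complete system `ẋ = f(x)` on `X` is
translation invariant along the unit vector `v ∈ interior K` and `X` is invariant under
translations by `v`, then `V(φ_t(ξ₁) - φ_t(ξ₂)) ≤ V(ξ₁ - ξ₂)` for all `ξ₁, ξ₂ ∈ X` and
`t > 0`, with strict inequality whenever `ξ₁ - ξ₂ ∉ span{v}`. -/
theorem stmt4 {n : ℕ} (K X : Set (EuclideanSpace ℝ (Fin n)))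
    (f : EuclideanSpace ℝ (Fin n) → EuclideanSpace ℝ (Fin n))
    (φ : ℝ → EuclideanSpace ℝ (Fin n) → EuclideanSpace ℝ (Fin n))
    (v : EuclideanSpace ℝ (Fin n))
    -- K is a closed pointed convex cone with nonempty interior
    (hKclosed : IsClosed K) (hKconv : Convex ℝ K)
    (hKcone : ∀ c : ℝ, 0 ≤ c → ∀ x ∈ K, c • x ∈ K)
    (hKpointed : ∀ x ∈ K, -x ∈ K → x = 0)
    (hv : v ∈ interior K) (hvnorm : ‖v‖ = 1)
    -- X is closed, the closure of its interior, and invariant under translations by v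
    (hXclosed : IsClosed X) (hXreg : X = closure (interior X))
    (hXtrans : ∀ x ∈ X, ∀ lam : ℝ, x + lam • v ∈ X)
    -- f is locally Lipschitz on X
    (hf : ∀ x ∈ X, ∃ L : NNReal, ∃ U ∈ nhdsWithin x X, LipschitzOnWith L f U)
    -- φ is the forward complete flow of ẋ = f(x) on X
    (hφ0 : ∀ ξ ∈ X, φ 0 ξ = ξ)
    (hφX : ∀ ξ ∈ X, ∀ t : ℝ, 0 ≤ t → φ t ξ ∈ X)
    (hφode : ∀ ξ ∈ X, ∀ t : ℝ, 0 ≤ t →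
      HasDerivWithinAt (fun s => φ s ξ) (f (φ t ξ)) (Set.Ici 0) t)
    -- strong monotonicity: ξ₁ ≻ ξ₂ ⟹ φ_t(ξ₁) ≫ φ_t(ξ₂) for t > 0
    (hmono : ∀ ξ₁ ∈ X, ∀ ξ₂ ∈ X, ∀ t : ℝ, 0 < t →
      ξ₁ - ξ₂ ∈ K → ξ₁ ≠ ξ₂ → φ t ξ₁ - φ t ξ₂ ∈ interior K)
    -- translation invariance along v
    (htrans : ∀ ξ ∈ X, ∀ lam t : ℝ, 0 ≤ t → φ t (ξ + lam • v) = φ t ξ + lam • v) :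
    ∀ ξ₁ ∈ X, ∀ ξ₂ ∈ X, ∀ t : ℝ, 0 < t →
      coneV K v (φ t ξ₁ - φ t ξ₂) ≤ coneV K v (ξ₁ - ξ₂) ∧
      (ξ₁ - ξ₂ ∉ Submodule.span ℝ {v} →
        coneV K v (φ t ξ₁ - φ t ξ₂) < coneV K v (ξ₁ - ξ₂)) :=
  stmt4_general K X φ v hKclosed hKcone hKpointed hv hvnorm hXtrans hmono htrans
end

section
/- Let the forward complete system ẋ = f(x) on X be strongly monotone in reversed time (for all ξ₁, ξ₂ ∈ X and all t > 0, φ_t(ξ₁) ≻ φ_t(ξ₂) implies ξ₁ ≫ ξ₂) and translation invariant along the unit vector v ∈ interior(K), with X invariant under translations by v, and let V(x) = inf{α ∈ ℝ : x ⪯ αv}. Then for all ξ₁, ξ₂ ∈ X and all t > 0, V(φ_t(ξ₁) − φ_t(ξ₂)) ≥ V(ξ₁ − ξ₂), and the inequality is strict whenever ξ₁ − ξ₂ ∉ span{v}. -/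
open Filter Topology Set

/-!
Translating `ξ₂` by `β • v` commutes with the flow, so if `φ_t ξ₁ - φ_t ξ₂ ≺ β v`, strong
monotonicity in reversed time gives `ξ₁ - ξ₂ ≪ β v` and hence `V(ξ₁ - ξ₂) < β`. With
`α = V(φ_t ξ₁ - φ_t ξ₂)`, taking `β = α + ε` gives the weak inequality and `β = α` the strict one,
unless `φ_t ξ₁ - φ_t ξ₂ = α v`. In that case the weak inequality for both orderings of `ξ₁, ξ₂`
gives `V(x) + V(-x) ≤ 0` for `x = ξ₁ - ξ₂`; since `V(x) v - x` and `V(-x) v + x` lie in the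
pointed cone `K` and sum to `(V(x) + V(-x)) v`, this forces `x = V(x) v`.
-/

section ProperCone

variable {E : Type*} [AddCommGroup E] [Module ℝ E] [TopologicalSpace E]

def properConeOfConvex (K : Set E) (hKclosed : IsClosed K) (hKconv : Convex ℝ K)
    (hKcone : ∀ c : ℝ, 0 ≤ c → ∀ x ∈ K, c • x ∈ K) (hK : K.Nonempty) : ProperCone ℝ E where
  carrier := K
  add_mem' {a b} ha hb := by
    convert hKcone 2 zero_le_two _ (hKconv ha hb one_half_pos.le one_half_pos.le (add_halves 1))
      using 1
    module
  zero_mem' := by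
    obtain ⟨x, hx⟩ := hK
    simpa using hKcone 0 le_rfl x hx
  smul_mem' c x hx := hKcone c c.2 x hx
  isClosed' := hKclosed

variable (C : ProperCone ℝ E) {v : E}

lemma ProperCone.nonneg_of_smul_mem (hC : C.toPointedCone.toConvexCone.Salient) (hv : v ∈ C)
    (hv0 : v ≠ 0) {c : ℝ} (hc : c • v ∈ C) : 0 ≤ c := by
  by_contra! hneg
  have hnv : -v ∈ C := by
    simpa [smul_smul, inv_mul_cancel₀ hneg.ne] using
      C.smul_mem hc (neg_nonneg.2 (inv_nonpos.2 hneg.le))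
  exact hC v hv hv0 hnv

variable [ContinuousSMul ℝ E] [ContinuousSub E]

lemma ProperCone.exists_smul_sub_mem (hv : v ∈ interior (C : Set E)) (x : E) :
    ∃ α : ℝ, α • v - x ∈ C := by
  have hlim : Tendsto (fun t : ℝ => v - t • x) (𝓝 0) (𝓝 v) := by
    have hcont : Continuous fun t : ℝ => v - t • x := by fun_prop
    simpa using hcont.tendsto 0
  obtain ⟨t, ht, htC⟩ := ((hlim.eventually (mem_interior_iff_mem_nhds.mp hv)).exists_gt)
  refine ⟨t⁻¹, ?_⟩
  simpa [smul_sub, smul_smul, inv_mul_cancel₀ ht.ne'] using C.smul_mem htC (inv_nonneg.2 ht.le)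

end ProperCone

section coneV

variable {n : ℕ} (C : ProperCone ℝ (EuclideanSpace ℝ (Fin n))) {v x : EuclideanSpace ℝ (Fin n)}

variable (x) in
lemma bddBelow_setOf_smul_sub_mem_s5 (hC : C.toPointedCone.toConvexCone.Salient)
    (hv : v ∈ interior (C : Set _)) (hv0 : v ≠ 0) :
    BddBelow {α : ℝ | α • v - x ∈ C} := by
  obtain ⟨c, hc⟩ := C.exists_smul_sub_mem hv (-x)
  refine ⟨-c, fun α hα => ?_⟩
  have hsum : (α + c) • v ∈ C := by
    rw [show (α + c) • v = (α • v - x) + (c • v - -x) by module]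
    exact C.add_mem hα hc
  linarith [C.nonneg_of_smul_mem hC (interior_subset hv) hv0 hsum]

lemma coneV_le (hC : C.toPointedCone.toConvexCone.Salient) (hv : v ∈ interior (C : Set _))
    (hv0 : v ≠ 0) {β : ℝ} (hβ : β • v - x ∈ C) : coneV C v x ≤ β :=
  csInf_le (bddBelow_setOf_smul_sub_mem_s5 C x hC hv hv0) hβ

variable (x) in
lemma smul_coneV_sub_mem (hC : C.toPointedCone.toConvexCone.Salient) (hv : v ∈ interior (C : Set _))
    (hv0 : v ≠ 0) : coneV C v x • v - x ∈ C := by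
  have hclosed : IsClosed {α : ℝ | α • v - x ∈ C} :=
    C.isClosed.preimage (by fun_prop)
  exact hclosed.csInf_mem (C.exists_smul_sub_mem hv x) (bddBelow_setOf_smul_sub_mem_s5 C x hC hv hv0)

lemma coneV_lt_of_mem_interior (hC : C.toPointedCone.toConvexCone.Salient)
    (hv : v ∈ interior (C : Set _)) (hv0 : v ≠ 0) {β : ℝ} (hβ : β • v - x ∈ interior (C : Set _)) :
    coneV C v x < β := by
  have hopen : IsOpen {α : ℝ | α • v - x ∈ interior (C : Set _)} :=
    isOpen_interior.preimage (by fun_prop)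
  obtain ⟨β', hβ'β, hβ'⟩ := (hopen.eventually_mem hβ).exists_lt
  exact (coneV_le C hC hv hv0 (interior_subset hβ')).trans_lt hβ'β

lemma coneV_smul_self (hC : C.toPointedCone.toConvexCone.Salient) (hv : v ∈ interior (C : Set _))
    (hv0 : v ≠ 0) (c : ℝ) : coneV C v (c • v) = c := by
  refine le_antisymm (coneV_le C hC hv hv0 (by simp)) ?_
  have hdiff : (coneV C v (c • v) - c) • v ∈ C := by
    simpa [sub_smul] using smul_coneV_sub_mem C (c • v) hC hv hv0
  linarith [C.nonneg_of_smul_mem hC (interior_subset hv) hv0 hdiff]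

lemma mem_span_of_coneV_add_coneV_neg_nonpos (hC : C.toPointedCone.toConvexCone.Salient)
    (hv : v ∈ interior (C : Set _)) (hv0 : v ≠ 0) (hx : coneV C v x + coneV C v (-x) ≤ 0) :
    x ∈ Submodule.span ℝ {v} := by
  set a := coneV C v x
  set b := coneV C v (-x)
  have ha : a • v - x ∈ C := smul_coneV_sub_mem C x hC hv hv0
  have hb : b • v + x ∈ C := by simpa using smul_coneV_sub_mem C (-x) hC hv hv0
  have hab : a + b = 0 := by
    have hsum : (a + b) • v ∈ C := by
      rw [show (a + b) • v = (a • v - x) + (b • v + x) by module]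
      exact C.add_mem ha hb
    linarith [C.nonneg_of_smul_mem hC (interior_subset hv) hv0 hsum]
  have hx : a • v - x = 0 := by
    by_contra hne
    refine hC _ ha hne ?_
    rwa [show -(a • v - x) = b • v + x by rw [eq_neg_of_add_eq_zero_right hab]; module]
  exact Submodule.mem_span_singleton.mpr ⟨a, sub_eq_zero.mp hx⟩

end coneV

section TimeMap

variable {E : Type*} [AddCommGroup E] [Module ℝ E] [TopologicalSpace E] {K X : Set E}
  {Φ : E → E} {v : E}

lemma smul_sub_sub_mem_interior_of_image (hXtrans : ∀ x ∈ X, ∀ lam : ℝ, x + lam • v ∈ X)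
    (hmono : ∀ ξ₁ ∈ X, ∀ ξ₂ ∈ X, Φ ξ₁ - Φ ξ₂ ∈ K → Φ ξ₁ ≠ Φ ξ₂ → ξ₁ - ξ₂ ∈ interior K)
    (htrans : ∀ ξ ∈ X, ∀ lam : ℝ, Φ (ξ + lam • v) = Φ ξ + lam • v)
    {ξ₁ ξ₂ : E} (hξ₁ : ξ₁ ∈ X) (hξ₂ : ξ₂ ∈ X) {β : ℝ}
    (hβ : β • v - (Φ ξ₁ - Φ ξ₂) ∈ K) (hne : β • v ≠ Φ ξ₁ - Φ ξ₂) :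
    β • v - (ξ₁ - ξ₂) ∈ interior K := by
  have hΦ : Φ (ξ₂ + β • v) - Φ ξ₁ = β • v - (Φ ξ₁ - Φ ξ₂) := by
    rw [htrans ξ₂ hξ₂ β]
    abel
  have hmem := hmono _ (hXtrans ξ₂ hξ₂ β) ξ₁ hξ₁ (hΦ ▸ hβ)
    (sub_ne_zero.mp (hΦ ▸ sub_ne_zero.mpr hne))
  rwa [show ξ₂ + β • v - ξ₁ = β • v - (ξ₁ - ξ₂) by abel] at hmem

end TimeMap

section coneVTimeMap

variable {n : ℕ} (C : ProperCone ℝ (EuclideanSpace ℝ (Fin n)))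
  {X : Set (EuclideanSpace ℝ (Fin n))} {Φ : EuclideanSpace ℝ (Fin n) → EuclideanSpace ℝ (Fin n)}
  {v ξ₁ ξ₂ : EuclideanSpace ℝ (Fin n)}

lemma coneV_sub_lt_of_image (hC : C.toPointedCone.toConvexCone.Salient)
    (hv : v ∈ interior (C : Set _)) (hv0 : v ≠ 0) (hXtrans : ∀ x ∈ X, ∀ lam : ℝ, x + lam • v ∈ X)
    (hmono : ∀ ξ₁ ∈ X, ∀ ξ₂ ∈ X,
      Φ ξ₁ - Φ ξ₂ ∈ C → Φ ξ₁ ≠ Φ ξ₂ → ξ₁ - ξ₂ ∈ interior (C : Set _))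
    (htrans : ∀ ξ ∈ X, ∀ lam : ℝ, Φ (ξ + lam • v) = Φ ξ + lam • v)
    (hξ₁ : ξ₁ ∈ X) (hξ₂ : ξ₂ ∈ X) {β : ℝ}
    (hβ : β • v - (Φ ξ₁ - Φ ξ₂) ∈ C) (hne : β • v ≠ Φ ξ₁ - Φ ξ₂) :
    coneV C v (ξ₁ - ξ₂) < β :=
  coneV_lt_of_mem_interior C hC hv hv0
    (smul_sub_sub_mem_interior_of_image hXtrans hmono htrans hξ₁ hξ₂ hβ hne)

lemma coneV_sub_le_coneV_image_sub (hC : C.toPointedCone.toConvexCone.Salient)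
    (hv : v ∈ interior (C : Set _)) (hv0 : v ≠ 0) (hXtrans : ∀ x ∈ X, ∀ lam : ℝ, x + lam • v ∈ X)
    (hmono : ∀ ξ₁ ∈ X, ∀ ξ₂ ∈ X,
      Φ ξ₁ - Φ ξ₂ ∈ C → Φ ξ₁ ≠ Φ ξ₂ → ξ₁ - ξ₂ ∈ interior (C : Set _))
    (htrans : ∀ ξ ∈ X, ∀ lam : ℝ, Φ (ξ + lam • v) = Φ ξ + lam • v)
    (hξ₁ : ξ₁ ∈ X) (hξ₂ : ξ₂ ∈ X) :
    coneV C v (ξ₁ - ξ₂) ≤ coneV C v (Φ ξ₁ - Φ ξ₂) := by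
  set α := coneV C v (Φ ξ₁ - Φ ξ₂)
  have hα : α • v - (Φ ξ₁ - Φ ξ₂) ∈ C := smul_coneV_sub_mem C _ hC hv hv0
  refine le_of_forall_pos_lt_add fun ε hε => ?_
  have hεv : ε • v ∈ C := C.smul_mem (interior_subset hv) hε.le
  have hsplit : (α + ε) • v - (Φ ξ₁ - Φ ξ₂) = (α • v - (Φ ξ₁ - Φ ξ₂)) + ε • v := by module
  refine coneV_sub_lt_of_image C hC hv hv0 hXtrans hmono htrans hξ₁ hξ₂
    (hsplit ▸ C.add_mem hα hεv) fun heq => ?_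
  have hneg : (-ε) • v ∈ C := by
    rwa [show (-ε) • v = α • v - (Φ ξ₁ - Φ ξ₂) by rw [← heq]; module]
  linarith [C.nonneg_of_smul_mem hC (interior_subset hv) hv0 hneg]

lemma coneV_sub_lt_coneV_image_sub (hC : C.toPointedCone.toConvexCone.Salient)
    (hv : v ∈ interior (C : Set _)) (hv0 : v ≠ 0) (hXtrans : ∀ x ∈ X, ∀ lam : ℝ, x + lam • v ∈ X)
    (hmono : ∀ ξ₁ ∈ X, ∀ ξ₂ ∈ X,
      Φ ξ₁ - Φ ξ₂ ∈ C → Φ ξ₁ ≠ Φ ξ₂ → ξ₁ - ξ₂ ∈ interior (C : Set _))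
    (htrans : ∀ ξ ∈ X, ∀ lam : ℝ, Φ (ξ + lam • v) = Φ ξ + lam • v)
    (hξ₁ : ξ₁ ∈ X) (hξ₂ : ξ₂ ∈ X) (hspan : ξ₁ - ξ₂ ∉ Submodule.span ℝ {v}) :
    coneV C v (ξ₁ - ξ₂) < coneV C v (Φ ξ₁ - Φ ξ₂) := by
  set α := coneV C v (Φ ξ₁ - Φ ξ₂)
  by_cases hdeg : α • v = Φ ξ₁ - Φ ξ₂
  · refine absurd (mem_span_of_coneV_add_coneV_neg_nonpos C hC hv hv0 ?_) hspan
    have h₁₂ := coneV_sub_le_coneV_image_sub C hC hv hv0 hXtrans hmono htrans hξ₁ hξ₂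
    have h₂₁ := coneV_sub_le_coneV_image_sub C hC hv hv0 hXtrans hmono htrans hξ₂ hξ₁
    rw [← neg_sub ξ₁ ξ₂, ← neg_sub (Φ ξ₁), ← hdeg, ← neg_smul, coneV_smul_self C hC hv hv0] at h₂₁
    linarith
  · exact coneV_sub_lt_of_image C hC hv hv0 hXtrans hmono htrans hξ₁ hξ₂
      (smul_coneV_sub_mem C _ hC hv hv0) hdeg

end coneVTimeMap

theorem stmt5_general {n : ℕ} (K X : Set (EuclideanSpace ℝ (Fin n)))
    (φ : ℝ → EuclideanSpace ℝ (Fin n) → EuclideanSpace ℝ (Fin n))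
    (v : EuclideanSpace ℝ (Fin n))
    -- K is a closed pointed convex cone with nonempty interior
    (hKclosed : IsClosed K) (hKconv : Convex ℝ K)
    (hKcone : ∀ c : ℝ, 0 ≤ c → ∀ x ∈ K, c • x ∈ K)
    (hKpointed : ∀ x ∈ K, -x ∈ K → x = 0)
    (hv : v ∈ interior K) (hvnorm : ‖v‖ = 1)
    -- X is closed, the closure of its interior, and invariant under translations by v
    (hXtrans : ∀ x ∈ X, ∀ lam : ℝ, x + lam • v ∈ X)
    -- strong monotonicity in reversed time: φ_t(ξ₁) ≻ φ_t(ξ₂) for t > 0 implies ξ₁ ≫ ξ₂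
    (hmono : ∀ ξ₁ ∈ X, ∀ ξ₂ ∈ X, ∀ t : ℝ, 0 < t →
      φ t ξ₁ - φ t ξ₂ ∈ K → φ t ξ₁ ≠ φ t ξ₂ → ξ₁ - ξ₂ ∈ interior K)
    -- translation invariance along v
    (htrans : ∀ ξ ∈ X, ∀ lam t : ℝ, 0 ≤ t → φ t (ξ + lam • v) = φ t ξ + lam • v) :
    ∀ ξ₁ ∈ X, ∀ ξ₂ ∈ X, ∀ t : ℝ, 0 < t →
      coneV K v (ξ₁ - ξ₂) ≤ coneV K v (φ t ξ₁ - φ t ξ₂) ∧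
      (ξ₁ - ξ₂ ∉ Submodule.span ℝ {v} →
        coneV K v (ξ₁ - ξ₂) < coneV K v (φ t ξ₁ - φ t ξ₂)) := by
  intro ξ₁ hξ₁ ξ₂ hξ₂ t ht
  have hv0 : v ≠ 0 := by
    rintro rfl
    simp at hvnorm
  let C := properConeOfConvex K hKclosed hKconv hKcone ⟨v, interior_subset hv⟩
  have hC : C.toPointedCone.toConvexCone.Salient := fun x hx hx0 hnx => hx0 (hKpointed x hx hnx)
  have hmono_t := fun ξ₁ h₁ ξ₂ h₂ => hmono ξ₁ h₁ ξ₂ h₂ t ht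
  have htrans_t := fun ξ h lam => htrans ξ h lam t ht.le
  exact ⟨coneV_sub_le_coneV_image_sub C hC hv hv0 hXtrans hmono_t htrans_t hξ₁ hξ₂,
    coneV_sub_lt_coneV_image_sub C hC hv hv0 hXtrans hmono_t htrans_t hξ₁ hξ₂⟩

/-- if the forward complete system `ẋ = f(x)` on `X` is strongly monotone in reversed time and
translation invariant along the unit vector `v ∈ interior K`, with `X` invariant under
translations by `v`, then `V(φ_t(ξ₁) - φ_t(ξ₂)) ≥ V(ξ₁ - ξ₂)` for all `ξ₁, ξ₂ ∈ X` and
`t > 0`, with strict inequality whenever `ξ₁ - ξ₂ ∉ span{v}`. -/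
theorem stmt5 {n : ℕ} (K X : Set (EuclideanSpace ℝ (Fin n)))
    (f : EuclideanSpace ℝ (Fin n) → EuclideanSpace ℝ (Fin n))
    (φ : ℝ → EuclideanSpace ℝ (Fin n) → EuclideanSpace ℝ (Fin n))
    (v : EuclideanSpace ℝ (Fin n))
    -- K is a closed pointed convex cone with nonempty interior
    (hKclosed : IsClosed K) (hKconv : Convex ℝ K)
    (hKcone : ∀ c : ℝ, 0 ≤ c → ∀ x ∈ K, c • x ∈ K)
    (hKpointed : ∀ x ∈ K, -x ∈ K → x = 0)
    (hv : v ∈ interior K) (hvnorm : ‖v‖ = 1)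
    -- X is closed, the closure of its interior, and invariant under translations by v
    (hXclosed : IsClosed X) (hXreg : X = closure (interior X))
    (hXtrans : ∀ x ∈ X, ∀ lam : ℝ, x + lam • v ∈ X)
    -- f is locally Lipschitz on X
    (hf : ∀ x ∈ X, ∃ L : NNReal, ∃ U ∈ nhdsWithin x X, LipschitzOnWith L f U)
    -- φ is the forward complete flow of ẋ = f(x) on X
    (hφ0 : ∀ ξ ∈ X, φ 0 ξ = ξ)
    (hφX : ∀ ξ ∈ X, ∀ t : ℝ, 0 ≤ t → φ t ξ ∈ X)
    (hφode : ∀ ξ ∈ X, ∀ t : ℝ, 0 ≤ t →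
      HasDerivWithinAt (fun s => φ s ξ) (f (φ t ξ)) (Set.Ici 0) t)
    -- strong monotonicity in reversed time: φ_t(ξ₁) ≻ φ_t(ξ₂) for t > 0 implies ξ₁ ≫ ξ₂
    (hmono : ∀ ξ₁ ∈ X, ∀ ξ₂ ∈ X, ∀ t : ℝ, 0 < t →
      φ t ξ₁ - φ t ξ₂ ∈ K → φ t ξ₁ ≠ φ t ξ₂ → ξ₁ - ξ₂ ∈ interior K)
    -- translation invariance along v
    (htrans : ∀ ξ ∈ X, ∀ lam t : ℝ, 0 ≤ t → φ t (ξ + lam • v) = φ t ξ + lam • v) :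
    ∀ ξ₁ ∈ X, ∀ ξ₂ ∈ X, ∀ t : ℝ, 0 < t →
      coneV K v (ξ₁ - ξ₂) ≤ coneV K v (φ t ξ₁ - φ t ξ₂) ∧
      (ξ₁ - ξ₂ ∉ Submodule.span ℝ {v} →
        coneV K v (ξ₁ - ξ₂) < coneV K v (φ t ξ₁ - φ t ξ₂)) :=
  stmt5_general K X φ v hKclosed hKconv hKcone hKpointed hv hvnorm hXtrans hmono htrans
end

section
/- Let the strongly monotone, forward complete system ẋ = f(x) on X be translation invariant along the unit vector v ∈ interior(K), with X closed and invariant under translations by v. Then the projected system has at most one equilibrium: if p₁, p₂ ∈ X ∩ v^⊥ both satisfy f(p₁) ∈ span{v} and f(p₂) ∈ span{v}, then p₁ = p₂. -/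
/-!
Let `f pᵢ = rᵢ • v` with `r₂ ≤ r₁`. By translation invariance and uniqueness of solutions, the
orbits are the lines `φ t pᵢ = pᵢ + t rᵢ v`. Shift `p₂` down along `v` to the lowest point
`q = p₂ + λ₀ v` with `q ⪰ p₁`; this exists because `v ∈ int K` and `K` is closed and pointed.
If `q ≠ p₁`, strong monotonicity gives `φ₁ q ≫ φ₁ p₁`, i.e. `q + (r₂ - r₁) v - p₁ ∈ int K`,
so a slightly lower shift of `p₂` still dominates `p₁`, contradicting minimality. Hence
`p₁ - p₂ ∈ span {v} ∩ v^⊥ = 0`.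
-/

open Filter Topology Set

section ConeOrder

variable {E : Type*} [AddCommGroup E] [Module ℝ E] [TopologicalSpace E]
  [IsTopologicalAddGroup E] [ContinuousSMul ℝ E] {K : Set E} {v : E}

theorem exists_add_smul_mem_of_mem_interior
    (hKcone : ∀ c : ℝ, 0 ≤ c → ∀ x ∈ K, c • x ∈ K) (hv : v ∈ interior K) (w : E) :
    ∃ lam : ℝ, w + lam • v ∈ K := by
  have hlim : Tendsto (fun μ : ℝ => v + μ • w) (𝓝 0) (𝓝 v) := by
    simpa using ((tendsto_id (x := 𝓝 (0 : ℝ))).smul_const w).const_add v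
  obtain ⟨μ, hμ, hμK⟩ := (hlim.eventually (mem_interior_iff_mem_nhds.mp hv)).exists_gt
  refine ⟨μ⁻¹, ?_⟩
  have := hKcone μ⁻¹ (inv_nonneg.mpr hμ.le) _ hμK
  rwa [smul_add, smul_smul, inv_mul_cancel₀ hμ.ne', one_smul, add_comm] at this

theorem bddBelow_setOf_add_smul_mem (hKclosed : IsClosed K)
    (hKcone : ∀ c : ℝ, 0 ≤ c → ∀ x ∈ K, c • x ∈ K) (hKpointed : ∀ x ∈ K, -x ∈ K → x = 0)
    (hvK : v ∈ K) (hv0 : v ≠ 0) (w : E) :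
    BddBelow {lam : ℝ | w + lam • v ∈ K} := by
  by_contra hunb
  have hS : ∃ᶠ lam : ℝ in atBot, w + lam • v ∈ K := frequently_atBot.mpr fun a => by
    obtain ⟨lam, hlam, hlt⟩ := not_bddBelow_iff.mp hunb a
    exact ⟨lam, hlt.le, hlam⟩
  have hfreq : ∃ᶠ lam : ℝ in atBot, (-lam)⁻¹ • w - v ∈ K := by
    refine (hS.and_eventually (eventually_lt_atBot 0)).mono fun lam ⟨hlam, hneg⟩ => ?_
    have := hKcone (-lam)⁻¹ (inv_nonneg.mpr (neg_nonneg.mpr hneg.le)) _ hlam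
    have hc : (-lam)⁻¹ * lam = -1 := by rw [inv_neg, neg_mul, inv_mul_cancel₀ hneg.ne]
    rwa [smul_add, smul_smul, hc, neg_one_smul, ← sub_eq_add_neg] at this
  have hlim : Tendsto (fun lam : ℝ => (-lam)⁻¹ • w - v) atBot (𝓝 (-v)) := by
    have : Tendsto (fun lam : ℝ => (-lam)⁻¹) atBot (𝓝 0) :=
      tendsto_inv_atTop_zero.comp tendsto_neg_atBot_atTop
    simpa using (this.smul_const w).sub_const v
  have hnegv : -v ∈ K := hKclosed.mem_of_frequently_of_tendsto hfreq hlim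
  exact hv0 (neg_eq_zero.mp (hKpointed (-v) hnegv (by rwa [neg_neg])))

theorem exists_isLeast_setOf_add_smul_mem (hKclosed : IsClosed K)
    (hKcone : ∀ c : ℝ, 0 ≤ c → ∀ x ∈ K, c • x ∈ K) (hKpointed : ∀ x ∈ K, -x ∈ K → x = 0)
    (hv : v ∈ interior K) (hv0 : v ≠ 0) (w : E) :
    ∃ lam₀ : ℝ, IsLeast {lam : ℝ | w + lam • v ∈ K} lam₀ := by
  have hclosed : IsClosed {lam : ℝ | w + lam • v ∈ K} :=
    hKclosed.preimage (continuous_const.add (continuous_id.smul continuous_const))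
  have hne := exists_add_smul_mem_of_mem_interior hKcone hv w
  have hbdd := bddBelow_setOf_add_smul_mem hKclosed hKcone hKpointed (interior_subset hv) hv0 w
  exact ⟨_, hclosed.csInf_mem hne hbdd, fun _ h => csInf_le hbdd h⟩

theorem exists_lt_add_smul_mem_of_mem_interior {w : E} {μ : ℝ}
    (h : w + μ • v ∈ interior K) : ∃ lam < μ, w + lam • v ∈ K := by
  have hcont : Continuous fun lam : ℝ => w + lam • v :=
    continuous_const.add (continuous_id.smul continuous_const)
  obtain ⟨lam, hlt, hlam⟩ :=
    (hcont.continuousAt.eventually (isOpen_interior.mem_nhds h)).exists_lt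
  exact ⟨lam, hlt, interior_subset hlam⟩

theorem exists_add_smul_eq_of_strongly_monotone {X : Set E} (hKclosed : IsClosed K)
    (hKcone : ∀ c : ℝ, 0 ≤ c → ∀ x ∈ K, c • x ∈ K)
    (hKpointed : ∀ x ∈ K, -x ∈ K → x = 0) (hv : v ∈ interior K) (hv0 : v ≠ 0)
    (hXtrans : ∀ x ∈ X, ∀ lam : ℝ, x + lam • v ∈ X) {ψ : E → E}
    (hψ : ∀ ξ₁ ∈ X, ∀ ξ₂ ∈ X, ξ₁ - ξ₂ ∈ K → ξ₁ ≠ ξ₂ → ψ ξ₁ - ψ ξ₂ ∈ interior K)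
    {x y : E} (hx : x ∈ X) (hy : y ∈ X) {a b : ℝ} (hab : b ≤ a)
    (hψx : ψ x = x + a • v) (hψy : ∀ lam : ℝ, ψ (y + lam • v) = y + lam • v + b • v) :
    ∃ lam : ℝ, y + lam • v = x := by
  obtain ⟨lam₀, hlam₀, hmin⟩ :=
    exists_isLeast_setOf_add_smul_mem hKclosed hKcone hKpointed hv hv0 (y - x)
  refine ⟨lam₀, by_contra fun hne => ?_⟩
  have hint := hψ _ (hXtrans y hy lam₀) x hx (by rwa [add_sub_right_comm]) hne
  rw [hψy, hψx, show y + lam₀ • v + b • v - (x + a • v) = (y - x) + (lam₀ + (b - a)) • v by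
    module] at hint
  obtain ⟨lam, hlt, hlam⟩ := exists_lt_add_smul_mem_of_mem_interior hint
  linarith [hmin hlam]

end ConeOrder

theorem eq_of_add_smul_eq_of_inner_eq_zero {F : Type*} [NormedAddCommGroup F]
    [InnerProductSpace ℝ F] {v x y : F} (hv0 : v ≠ 0) (hx : inner ℝ v x = 0)
    (hy : inner ℝ v y = 0) {lam : ℝ} (h : y + lam • v = x) : y = x := by
  have hinner := congrArg (inner ℝ v) h
  rw [inner_add_right, inner_smul_right, hx, hy, zero_add, mul_eq_zero] at hinner
  rcases hinner with hlam | hvv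
  · simpa [hlam] using h
  · exact absurd hvv (inner_self_ne_zero.mpr hv0)

section ODE

variable {E : Type*} [NormedAddCommGroup E] [NormedSpace ℝ E] {f : E → E} {X : Set E}

theorem eqOn_Ici_of_hasDerivWithinAt_of_locallyLipschitzOn (hf : LocallyLipschitzOn X f)
    {γ η : ℝ → E} (hγ : ∀ t, 0 ≤ t → HasDerivWithinAt γ (f (γ t)) (Ici 0) t)
    (hη : ∀ t, 0 ≤ t → HasDerivWithinAt η (f (η t)) (Ici 0) t)
    (hγX : ∀ t, 0 ≤ t → γ t ∈ X) (hηX : ∀ t, 0 ≤ t → η t ∈ X) (h0 : γ 0 = η 0) :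
    EqOn γ η (Ici 0) := by
  intro b hb
  have hγc : ContinuousOn γ (Icc 0 b) := fun t ht =>
    (hγ t ht.1).continuousWithinAt.mono Icc_subset_Ici_self
  have hηc : ContinuousOn η (Icc 0 b) := fun t ht =>
    (hη t ht.1).continuousWithinAt.mono Icc_subset_Ici_self
  set C := γ '' Icc 0 b ∪ η '' Icc 0 b
  have hC : IsCompact C :=
    (isCompact_Icc.image_of_continuousOn hγc).union (isCompact_Icc.image_of_continuousOn hηc)
  have hCX : C ⊆ X := union_subset (image_subset_iff.mpr fun t ht => hγX t ht.1)
    (image_subset_iff.mpr fun t ht => hηX t ht.1)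
  obtain ⟨L, hL⟩ := (hf.mono hCX).exists_lipschitzOnWith_of_compact hC
  refine ODE_solution_unique_of_mem_Icc_right (v := fun _ => f) (s := fun _ => C)
    (fun _ _ => hL) hγc (fun t ht => (hγ t ht.1).mono (Ici_subset_Ici.mpr ht.1))
    (fun t ht => Or.inl (mem_image_of_mem γ (Ico_subset_Icc_self ht))) hηc
    (fun t ht => (hη t ht.1).mono (Ici_subset_Ici.mpr ht.1))
    (fun t ht => Or.inr (mem_image_of_mem η (Ico_subset_Icc_self ht))) h0 ⟨hb, le_rfl⟩

theorem flow_eq_add_smul_of_apply_eq_smul {φ : ℝ → E → E} {v : E}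
    (hXtrans : ∀ x ∈ X, ∀ lam : ℝ, x + lam • v ∈ X) (hf : LocallyLipschitzOn X f)
    (hft : ∀ x ∈ X, ∀ lam : ℝ, f (x + lam • v) = f x) (hφ0 : ∀ ξ ∈ X, φ 0 ξ = ξ)
    (hφX : ∀ ξ ∈ X, ∀ t : ℝ, 0 ≤ t → φ t ξ ∈ X)
    (hφode : ∀ ξ ∈ X, ∀ t : ℝ, 0 ≤ t →
      HasDerivWithinAt (fun s => φ s ξ) (f (φ t ξ)) (Ici 0) t)
    {q : E} (hq : q ∈ X) {r : ℝ} (hfq : f q = r • v) {t : ℝ} (ht : 0 ≤ t) :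
    φ t q = q + (t * r) • v := by
  refine eqOn_Ici_of_hasDerivWithinAt_of_locallyLipschitzOn (η := fun s => q + (s * r) • v) hf
    (hφode q hq) (fun s _ => ?_) (hφX q hq) (fun s _ => hXtrans q hq _) (by simp [hφ0 q hq]) ht
  rw [hft q hq, hfq]
  exact (((hasDerivAt_mul_const r).smul_const v).const_add q).hasDerivWithinAt

end ODE

theorem stmt10_general {n : ℕ} (K X : Set (EuclideanSpace ℝ (Fin n)))
    (f : EuclideanSpace ℝ (Fin n) → EuclideanSpace ℝ (Fin n))
    (φ : ℝ → EuclideanSpace ℝ (Fin n) → EuclideanSpace ℝ (Fin n))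
    (v : EuclideanSpace ℝ (Fin n))
    -- K is a closed pointed convex cone with nonempty interior
    (hKclosed : IsClosed K)
    (hKcone : ∀ c : ℝ, 0 ≤ c → ∀ x ∈ K, c • x ∈ K)
    (hKpointed : ∀ x ∈ K, -x ∈ K → x = 0)
    (hv : v ∈ interior K) (hvnorm : ‖v‖ = 1)
    -- X is closed, the closure of its interior, and invariant under translations by v
    (hXtrans : ∀ x ∈ X, ∀ lam : ℝ, x + lam • v ∈ X)
    -- f is locally Lipschitz on X and translation invariant along v
    (hf : ∀ x ∈ X, ∃ L : NNReal, ∃ U ∈ nhdsWithin x X, LipschitzOnWith L f U)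
    (hft : ∀ x ∈ X, ∀ lam : ℝ, f (x + lam • v) = f x)
    -- φ is the forward complete flow of ẋ = f(x) on X
    (hφ0 : ∀ ξ ∈ X, φ 0 ξ = ξ)
    (hφX : ∀ ξ ∈ X, ∀ t : ℝ, 0 ≤ t → φ t ξ ∈ X)
    (hφode : ∀ ξ ∈ X, ∀ t : ℝ, 0 ≤ t →
      HasDerivWithinAt (fun s => φ s ξ) (f (φ t ξ)) (Set.Ici 0) t)
    -- strong monotonicity: ξ₁ ≻ ξ₂ ⟹ φ_t(ξ₁) ≫ φ_t(ξ₂) for t > 0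
    (hmono : ∀ ξ₁ ∈ X, ∀ ξ₂ ∈ X, ∀ t : ℝ, 0 < t →
      ξ₁ - ξ₂ ∈ K → ξ₁ ≠ ξ₂ → φ t ξ₁ - φ t ξ₂ ∈ interior K)
    -- p₁ and p₂ are equilibria of the projected system in X ∩ v^⊥
    (p₁ p₂ : EuclideanSpace ℝ (Fin n))
    (hp₁X : p₁ ∈ X) (hp₁v : (inner ℝ v p₁ : ℝ) = 0) (hp₁e : ∃ r : ℝ, f p₁ = r • v)
    (hp₂X : p₂ ∈ X) (hp₂v : (inner ℝ v p₂ : ℝ) = 0) (hp₂e : ∃ r : ℝ, f p₂ = r • v) :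
    p₁ = p₂ := by
  have hv0 : v ≠ 0 := norm_ne_zero_iff.mp (by rw [hvnorm]; exact one_ne_zero)
  have hflow : ∀ q ∈ X, ∀ r : ℝ, f q = r • v → φ 1 q = q + r • v := fun q hq r hfq => by
    simpa using flow_eq_add_smul_of_apply_eq_smul hXtrans (fun x hx => hf x hx) hft hφ0 hφX hφode
      hq hfq zero_le_one
  have hline : ∀ x ∈ X, ∀ y ∈ X, ∀ a b : ℝ, f x = a • v → f y = b • v → b ≤ a →
      ∃ lam : ℝ, y + lam • v = x := fun x hx y hy a b hfx hfy hab =>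
    exists_add_smul_eq_of_strongly_monotone hKclosed hKcone hKpointed hv hv0 hXtrans
      (fun ξ₁ h₁ ξ₂ h₂ => hmono ξ₁ h₁ ξ₂ h₂ 1 one_pos) hx hy hab (hflow x hx a hfx)
      fun lam => hflow _ (hXtrans y hy lam) b (by rw [hft y hy, hfy])
  obtain ⟨r₁, hr₁⟩ := hp₁e
  obtain ⟨r₂, hr₂⟩ := hp₂e
  rcases le_total r₂ r₁ with h | h
  · obtain ⟨lam, hlam⟩ := hline p₁ hp₁X p₂ hp₂X r₁ r₂ hr₁ hr₂ h
    exact (eq_of_add_smul_eq_of_inner_eq_zero hv0 hp₁v hp₂v hlam).symm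
  · obtain ⟨lam, hlam⟩ := hline p₂ hp₂X p₁ hp₁X r₂ r₁ hr₂ hr₁ h
    exact eq_of_add_smul_eq_of_inner_eq_zero hv0 hp₂v hp₁v hlam

/-- a strongly monotone, forward complete system `ẋ = f(x)` on `X`,
translation invariant along the unit vector `v ∈ interior K`, with `X` closed and
invariant under translations by `v`, has at most one projected equilibrium: if
`p₁, p₂ ∈ X ∩ v^⊥` satisfy `f(p₁) ∈ span{v}` and `f(p₂) ∈ span{v}`, then `p₁ = p₂`. -/
theorem stmt10 {n : ℕ} (K X : Set (EuclideanSpace ℝ (Fin n)))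
    (f : EuclideanSpace ℝ (Fin n) → EuclideanSpace ℝ (Fin n))
    (φ : ℝ → EuclideanSpace ℝ (Fin n) → EuclideanSpace ℝ (Fin n))
    (v : EuclideanSpace ℝ (Fin n))
    -- K is a closed pointed convex cone with nonempty interior
    (hKclosed : IsClosed K) (hKconv : Convex ℝ K)
    (hKcone : ∀ c : ℝ, 0 ≤ c → ∀ x ∈ K, c • x ∈ K)
    (hKpointed : ∀ x ∈ K, -x ∈ K → x = 0)
    (hv : v ∈ interior K) (hvnorm : ‖v‖ = 1)
    -- X is closed, the closure of its interior, and invariant under translations by v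
    (hXclosed : IsClosed X) (hXreg : X = closure (interior X))
    (hXtrans : ∀ x ∈ X, ∀ lam : ℝ, x + lam • v ∈ X)
    -- f is locally Lipschitz on X and translation invariant along v
    (hf : ∀ x ∈ X, ∃ L : NNReal, ∃ U ∈ nhdsWithin x X, LipschitzOnWith L f U)
    (hft : ∀ x ∈ X, ∀ lam : ℝ, f (x + lam • v) = f x)
    -- φ is the forward complete flow of ẋ = f(x) on X
    (hφ0 : ∀ ξ ∈ X, φ 0 ξ = ξ)
    (hφX : ∀ ξ ∈ X, ∀ t : ℝ, 0 ≤ t → φ t ξ ∈ X)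
    (hφode : ∀ ξ ∈ X, ∀ t : ℝ, 0 ≤ t →
      HasDerivWithinAt (fun s => φ s ξ) (f (φ t ξ)) (Set.Ici 0) t)
    -- strong monotonicity: ξ₁ ≻ ξ₂ ⟹ φ_t(ξ₁) ≫ φ_t(ξ₂) for t > 0
    (hmono : ∀ ξ₁ ∈ X, ∀ ξ₂ ∈ X, ∀ t : ℝ, 0 < t →
      ξ₁ - ξ₂ ∈ K → ξ₁ ≠ ξ₂ → φ t ξ₁ - φ t ξ₂ ∈ interior K)
    -- p₁ and p₂ are equilibria of the projected system in X ∩ v^⊥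
    (p₁ p₂ : EuclideanSpace ℝ (Fin n))
    (hp₁X : p₁ ∈ X) (hp₁v : (inner ℝ v p₁ : ℝ) = 0) (hp₁e : ∃ r : ℝ, f p₁ = r • v)
    (hp₂X : p₂ ∈ X) (hp₂v : (inner ℝ v p₂ : ℝ) = 0) (hp₂e : ∃ r : ℝ, f p₂ = r • v) :
    p₁ = p₂ :=
  stmt10_general K X f φ v hKclosed hKcone hKpointed hv hvnorm hXtrans hf hft hφ0 hφX hφode hmono p₁
    p₂ hp₁X hp₁v hp₁e hp₂X hp₂v hp₂e
end
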